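/- arXiv:2502.03113 — 4 statements merged into one kernel-verified Lean document; each statement's English description precedes it below -/
import Mathlib

section
/- Consider a scheduling game with rank-based utilities on two machines with speeds r₁ = 1 and r₂ = r = a/b, where a ≤ b are positive coprime integers, with n ≥ 1 unit jobs and a global priority list (both machines share the same priority list π), and write n = ℓ·(a+b) + c with 0 ≤ c < a+b. Then the game admits a pure Nash equilibrium if and only if c ≠ 0. -/
open Finset
open scoped Classical

noncomputable section

variable {J M : Type*} [Fintype J]

/-- Completion time of job `j` in profile `s`: the total processing time of the jobs on
`j`'s machine that do not come after `j` in that machine's priority list, divided by the speed. -/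
def Ctime (p : J → ℝ) (r : M → ℝ) (π : M → J → ℕ) (s : J → M) (j : J) : ℝ :=
  (∑ j' ∈ univ.filter (fun j' => s j' = s j ∧ π (s j) j' ≤ π (s j) j), p j') / r (s j)

/-- Rank of job `j` in profile `s`. -/
def rankOf (p : J → ℝ) (r : M → ℝ) (π : M → J → ℕ) (s : J → M) (j : J) : ℝ :=
  ((univ.filter (fun j' => Ctime p r π s j' < Ctime p r π s j)).card : ℝ) +
    (((univ.filter (fun j' => Ctime p r π s j' = Ctime p r π s j)).card : ℝ) + 1) / 2

/-- The unilateral deviation of job `j` to machine `i` is beneficial. -/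
def Beneficial (p : J → ℝ) (r : M → ℝ) (π : M → J → ℕ) (s : J → M) (j : J) (i : M) : Prop :=
  rankOf p r π (Function.update s j i) j < rankOf p r π s j ∨
    (rankOf p r π (Function.update s j i) j = rankOf p r π s j ∧
      Ctime p r π (Function.update s j i) j < Ctime p r π s j)

/-- Pure Nash equilibrium: no job has a beneficial deviation. -/
def IsNE (p : J → ℝ) (r : M → ℝ) (π : M → J → ℕ) (s : J → M) : Prop :=
  ∀ j i, ¬ Beneficial p r π s j i

namespace NEAux

variable {n : ℕ}

def posC (s : Fin n → Fin 2) (j : Fin n) : ℕ :=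
  (univ.filter (fun k => s k = s j ∧ k ≤ j)).card

def Xc (s : Fin n → Fin 2) (j : Fin n) : ℕ :=
  (univ.filter (fun k => s k = s j ∧ k < j)).card

def Yc (s : Fin n → Fin 2) (i : Fin 2) (j : Fin n) : ℕ :=
  (univ.filter (fun k => s k = i ∧ k < j)).card

def Cv (r : Fin 2 → ℝ) (s : Fin n → Fin 2) (j : Fin n) : ℝ := (posC s j : ℝ) / r (s j)

def Nv (r : Fin 2 → ℝ) (s : Fin n → Fin 2) (j : Fin n) : ℕ :=
  (univ.filter (fun k => Cv r s k < Cv r s j)).card +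
    (univ.filter (fun k => Cv r s k ≤ Cv r s j)).card

lemma fin2_resolve {x y z : Fin 2} (h1 : x ≠ y) (h2 : z ≠ y) : x = z := by
  fin_cases x <;> fin_cases y <;> fin_cases z <;> simp_all

lemma ctime_eq (π : Fin n → ℕ) (hπ : StrictMono π) (r : Fin 2 → ℝ) (s : Fin n → Fin 2)
    (j : Fin n) :
    Ctime (fun _ => (1:ℝ)) r (fun _ => π) s j = Cv r s j := by
  unfold Ctime Cv posC
  rw [Finset.sum_const, nsmul_eq_mul, mul_one]
  congr 2
  · congr 1
    ext k
    simp [hπ.le_iff_le]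

lemma rank_eq (π : Fin n → ℕ) (hπ : StrictMono π) (r : Fin 2 → ℝ) (s : Fin n → Fin 2)
    (j : Fin n) :
    rankOf (fun _ => (1:ℝ)) r (fun _ => π) s j = ((Nv r s j : ℝ) + 1) / 2 := by
  unfold rankOf Nv
  have h1 : (univ.filter (fun k => Ctime (fun _ => (1:ℝ)) r (fun _ => π) s k <
      Ctime (fun _ => (1:ℝ)) r (fun _ => π) s j)) =
      univ.filter (fun k => Cv r s k < Cv r s j) := by
    apply filter_congr; intro k _; rw [ctime_eq π hπ, ctime_eq π hπ]
  have h2 : (univ.filter (fun k => Ctime (fun _ => (1:ℝ)) r (fun _ => π) s k =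
      Ctime (fun _ => (1:ℝ)) r (fun _ => π) s j)) =
      univ.filter (fun k => Cv r s k = Cv r s j) := by
    apply filter_congr; intro k _; rw [ctime_eq π hπ, ctime_eq π hπ]
  rw [h1, h2]
  have disj : Disjoint (univ.filter (fun k => Cv r s k < Cv r s j))
      (univ.filter (fun k => Cv r s k = Cv r s j)) := by
    simp only [disjoint_left, mem_filter, mem_univ, true_and]
    intro k hk1 hk2
    exact absurd hk2 (ne_of_lt hk1)
  have key : (univ.filter (fun k => Cv r s k ≤ Cv r s j)).card =
      (univ.filter (fun k => Cv r s k < Cv r s j)).card +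
      (univ.filter (fun k => Cv r s k = Cv r s j)).card := by
    rw [← card_union_of_disjoint disj]
    congr 1
    ext k
    simp only [mem_filter, mem_univ, true_and, mem_union]
    exact le_iff_lt_or_eq
  rw [key]
  push_cast
  ring

end NEAux

namespace NEAux2
open NEAux

variable {n : ℕ} (r : Fin 2 → ℝ) (s : Fin n → Fin 2) (j : Fin n) (i : Fin 2)

lemma posC_update_self (hi : i ≠ s j) :
    posC (Function.update s j i) j = Yc s i j + 1 := by
  unfold posC Yc
  have h : (univ.filter (fun m => Function.update s j i m = Function.update s j i j ∧ m ≤ j)) =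
      insert j (univ.filter (fun m => s m = i ∧ m < j)) := by
    ext m
    simp only [mem_insert, mem_filter, mem_univ, true_and, Function.update_self]
    constructor
    · rintro ⟨h1, h2⟩
      rcases eq_or_ne m j with rfl | hm
      · exact Or.inl rfl
      · rw [Function.update_of_ne hm] at h1
        exact Or.inr ⟨h1, lt_of_le_of_ne h2 hm⟩
    · rintro (rfl | ⟨h1, h2⟩)
      · exact ⟨Function.update_self _ _ _, le_refl _⟩
      · rw [Function.update_of_ne (ne_of_lt h2)]
        exact ⟨h1, le_of_lt h2⟩
  rw [h, card_insert_of_notMem (by simp)]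

lemma posC_update_lt {k : Fin n} (hk : k < j) :
    posC (Function.update s j i) k = posC s k := by
  unfold posC
  have hkj : k ≠ j := ne_of_lt hk
  congr 1
  apply filter_congr
  intro m _
  rw [Function.update_of_ne hkj]
  rcases eq_or_ne m j with rfl | hm
  · simp [Function.update_self, not_le.mpr hk]
  · rw [Function.update_of_ne hm]

lemma posC_update_gt_same {k : Fin n} (hi : i ≠ s j) (hk : j < k) (hsk : s k = s j) :
    posC s k = posC (Function.update s j i) k + 1 := by
  unfold posC
  have hkj : k ≠ j := ne_of_gt hk
  have h : (univ.filter (fun m => s m = s k ∧ m ≤ k)) =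
      insert j (univ.filter (fun m => Function.update s j i m = Function.update s j i k ∧ m ≤ k)) := by
    ext m
    simp only [mem_insert, mem_filter, mem_univ, true_and, Function.update_of_ne hkj]
    constructor
    · rintro ⟨h1, h2⟩
      rcases eq_or_ne m j with rfl | hm
      · exact Or.inl rfl
      · rw [Function.update_of_ne hm]; exact Or.inr ⟨h1, h2⟩
    · rintro (rfl | ⟨h1, h2⟩)
      · exact ⟨hsk.symm, le_of_lt hk⟩
      · rcases eq_or_ne m j with rfl | hm
        · rw [Function.update_self] at h1
          exact absurd (h1.trans hsk) hi
        · rw [Function.update_of_ne hm] at h1; exact ⟨h1, h2⟩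
  rw [h, card_insert_of_notMem]
  simp only [mem_filter, mem_univ, true_and, Function.update_self, Function.update_of_ne hkj,
    not_and]
  intro h1
  exact absurd (h1.trans hsk) hi

lemma posC_lt_of_gt_same {k : Fin n} (hk : j < k) (hsk : s k = s j) :
    posC s j + 1 ≤ posC s k := by
  unfold posC
  have hsub : insert k (univ.filter (fun m => s m = s j ∧ m ≤ j)) ⊆
      univ.filter (fun m => s m = s k ∧ m ≤ k) := by
    intro m
    simp only [mem_insert, mem_filter, mem_univ, true_and]
    rintro (rfl | ⟨h1, h2⟩)
    · exact ⟨rfl, le_refl _⟩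
    · exact ⟨h1.trans hsk.symm, h2.trans (le_of_lt hk)⟩
  have h2 := card_le_card hsub
  rw [card_insert_of_notMem (by simp [not_le.mpr hk])] at h2
  omega

lemma posC_update_gt_other {k : Fin n} (hi : i ≠ s j) (hk : j < k) (hsk : s k = i) :
    posC (Function.update s j i) k = posC s k + 1 := by
  unfold posC
  have hkj : k ≠ j := ne_of_gt hk
  have h : (univ.filter (fun m => Function.update s j i m = Function.update s j i k ∧ m ≤ k)) =
      insert j (univ.filter (fun m => s m = s k ∧ m ≤ k)) := by
    ext m
    simp only [mem_insert, mem_filter, mem_univ, true_and, Function.update_of_ne hkj]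
    constructor
    · rintro ⟨h1, h2⟩
      rcases eq_or_ne m j with rfl | hm
      · exact Or.inl rfl
      · rw [Function.update_of_ne hm] at h1; exact Or.inr ⟨h1, h2⟩
    · rintro (rfl | ⟨h1, h2⟩)
      · rw [Function.update_self]; exact ⟨hsk.symm, le_of_lt hk⟩
      · rcases eq_or_ne m j with rfl | hm
        · exact absurd (h1.trans hsk).symm hi
        · rw [Function.update_of_ne hm]; exact ⟨h1, h2⟩
  rw [h, card_insert_of_notMem]
  simp only [mem_filter, mem_univ, true_and, not_and]
  intro h1
  exact absurd (h1.trans hsk).symm hi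

lemma Yc_lt_posC {k : Fin n} (hk : j < k) (hsk : s k = i) :
    Yc s i j + 1 ≤ posC s k := by
  unfold Yc posC
  have hsub : insert k (univ.filter (fun m => s m = i ∧ m < j)) ⊆
      univ.filter (fun m => s m = s k ∧ m ≤ k) := by
    intro m
    simp only [mem_insert, mem_filter, mem_univ, true_and]
    rintro (rfl | ⟨h1, h2⟩)
    · exact ⟨rfl, le_refl _⟩
    · exact ⟨h1.trans hsk.symm, le_of_lt (h2.trans hk)⟩
  have h2 := card_le_card hsub
  rw [card_insert_of_notMem (by simp [asymm hk])] at h2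
  omega

lemma posC_le_X_of_lt_same {k : Fin n} (hk : k < j) (hsk : s k = s j) :
    posC s k ≤ Xc s j := by
  unfold posC Xc
  apply card_le_card
  intro m
  simp only [mem_filter, mem_univ, true_and]
  rintro ⟨h1, h2⟩
  exact ⟨h1.trans hsk, lt_of_le_of_lt h2 hk⟩

lemma posC_le_Y_of_lt_other {k : Fin n} (hk : k < j) (hsk : s k = i) :
    posC s k ≤ Yc s i j := by
  unfold posC Yc
  apply card_le_card
  intro m
  simp only [mem_filter, mem_univ, true_and]
  rintro ⟨h1, h2⟩
  exact ⟨h1.trans hsk, lt_of_le_of_lt h2 hk⟩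

lemma posC_eq_X : posC s j = Xc s j + 1 := by
  unfold posC Xc
  have h : (univ.filter (fun m => s m = s j ∧ m ≤ j)) =
      insert j (univ.filter (fun m => s m = s j ∧ m < j)) := by
    ext m
    simp only [mem_insert, mem_filter, mem_univ, true_and]
    constructor
    · rintro ⟨h1, h2⟩
      rcases eq_or_ne m j with rfl | hm
      · exact Or.inl rfl
      · exact Or.inr ⟨h1, lt_of_le_of_ne h2 hm⟩
    · rintro (rfl | ⟨h1, h2⟩)
      · exact ⟨rfl, le_refl _⟩
      · exact ⟨h1, le_of_lt h2⟩
  rw [h, card_insert_of_notMem (by simp)]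

end NEAux2

namespace NEAux3
open NEAux NEAux2

variable {n : ℕ} {r : Fin 2 → ℝ} {s : Fin n → Fin 2} {j : Fin n} {i : Fin 2}

lemma Cv_formula : Cv r s j = ((Xc s j : ℝ) + 1) / r (s j) := by
  unfold Cv
  rw [posC_eq_X]
  push_cast
  ring_nf

lemma Cv_update_self (hi : i ≠ s j) :
    Cv r (Function.update s j i) j = ((Yc s i j : ℝ) + 1) / r i := by
  unfold Cv
  rw [posC_update_self s j i hi, Function.update_self]
  push_cast
  ring_nf

lemma H_lt (hr : ∀ t, 0 < r t) (hi : i ≠ s j) {k : Fin n} (hk : k < j) :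
    Cv r (Function.update s j i) k = Cv r s k ∧
      (Cv r s k < Cv r s j ∨ Cv r s k < Cv r (Function.update s j i) j) := by
  constructor
  · unfold Cv
    rw [posC_update_lt s j i hk, Function.update_of_ne (ne_of_lt hk)]
  · by_cases hsk : s k = s j
    · left
      unfold Cv
      rw [hsk]
      apply (div_lt_div_iff_of_pos_right (hr _)).mpr
      have h1 := posC_le_X_of_lt_same s j hk hsk
      have h2 := posC_eq_X s j
      exact_mod_cast (by omega : posC s k < posC s j)
    · right
      have hsk' : s k = i := fin2_resolve hsk hi
      rw [Cv_update_self hi]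
      unfold Cv
      rw [hsk']
      apply (div_lt_div_iff_of_pos_right (hr i)).mpr
      have h1 := posC_le_Y_of_lt_other s j i hk hsk'
      have : (posC s k : ℝ) ≤ (Yc s i j : ℝ) := by exact_mod_cast h1
      linarith

lemma H_gt_same (hr : ∀ t, 0 < r t) (hi : i ≠ s j) {k : Fin n} (hk : j < k) (hsk : s k = s j) :
    Cv r s j < Cv r s k ∧ Cv r s j ≤ Cv r (Function.update s j i) k := by
  have hp := posC_lt_of_gt_same s j hk hsk
  constructor
  · unfold Cv
    rw [hsk]
    apply (div_lt_div_iff_of_pos_right (hr _)).mpr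
    exact_mod_cast (by omega : posC s j < posC s k)
  · have he := posC_update_gt_same s j i hi hk hsk
    unfold Cv
    rw [Function.update_of_ne (ne_of_gt hk), hsk]
    apply (div_le_div_iff_of_pos_right (hr _)).mpr
    exact_mod_cast (by omega : posC s j ≤ posC (Function.update s j i) k)

lemma H_gt_other (hr : ∀ t, 0 < r t) (hi : i ≠ s j) {k : Fin n} (hk : j < k) (hsk : s k = i) :
    Cv r (Function.update s j i) j ≤ Cv r s k ∧
      Cv r (Function.update s j i) j < Cv r (Function.update s j i) k := by
  have hp := Yc_lt_posC s j i hk hsk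
  constructor
  · rw [Cv_update_self hi]
    unfold Cv
    rw [hsk]
    apply (div_le_div_iff_of_pos_right (hr i)).mpr
    push_cast
    exact_mod_cast hp
  · have he := posC_update_gt_other s j i hi hk hsk
    rw [Cv_update_self hi]
    unfold Cv
    rw [Function.update_of_ne (ne_of_gt hk), hsk, he]
    apply (div_lt_div_iff_of_pos_right (hr i)).mpr
    push_cast
    exact_mod_cast (by omega : Yc s i j + 1 < posC s k + 1)

end NEAux3

namespace NEAux4
open NEAux NEAux2 NEAux3

variable {n : ℕ} {r : Fin 2 → ℝ} {s : Fin n → Fin 2} {j : Fin n} {i : Fin 2}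

lemma div_cancel_eq {x y c : ℝ} (hc : 0 < c) (h : x / c = y / c) : x = y := by
  field_simp at h
  exact h

lemma ben_iff_N (π : Fin n → ℕ) (hπ : StrictMono π) :
    Beneficial (fun _ => (1:ℝ)) r (fun _ => π) s j i ↔
      (Nv r (Function.update s j i) j < Nv r s j ∨
        (Nv r (Function.update s j i) j = Nv r s j ∧
          Cv r (Function.update s j i) j < Cv r s j)) := by
  have hlt : ∀ p q : ℕ, (((p:ℝ) + 1) / 2 < ((q:ℝ) + 1) / 2 ↔ p < q) := by
    intro p q
    rw [div_lt_div_iff_of_pos_right (by norm_num : (0:ℝ) < 2)]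
    constructor
    · intro h
      exact_mod_cast (by linarith : (p:ℝ) < q)
    · intro h
      have : (p:ℝ) < q := by exact_mod_cast h
      linarith
  have heq2 : ∀ p q : ℕ, ((((p:ℝ) + 1) / 2 = ((q:ℝ) + 1) / 2) ↔ p = q) := by
    intro p q
    constructor
    · intro h
      have h2 := div_cancel_eq (by norm_num : (0:ℝ) < 2) h
      exact_mod_cast (by linarith : (p:ℝ) = q)
    · intro h; rw [h]
  unfold Beneficial
  rw [show (fun a b => Classical.propDecidable (a = b) : DecidableEq (Fin n)) =
    instDecidableEqFin n from Subsingleton.elim _ _]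
  rw [rank_eq π hπ, rank_eq π hπ, ctime_eq π hπ, ctime_eq π hπ, hlt, heq2]

lemma benef_of_lt (π : Fin n → ℕ) (hπ : StrictMono π) (hr : ∀ t, 0 < r t) (hi : i ≠ s j)
    (h : Cv r (Function.update s j i) j < Cv r s j) :
    Beneficial (fun _ => (1:ℝ)) r (fun _ => π) s j i := by
  have hsub1 : (univ.filter fun k => Cv r (Function.update s j i) k < Cv r (Function.update s j i) j) ⊆
      univ.filter fun k => Cv r s k < Cv r s j := by
    intro k hk
    simp only [mem_filter, mem_univ, true_and] at hk ⊢
    rcases lt_trichotomy k j with h1 | rfl | h1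
    · obtain ⟨e, _⟩ := H_lt hr hi h1
      rw [e] at hk
      exact hk.trans h
    · exact absurd hk (lt_irrefl _)
    · by_cases hsk : s k = s j
      · exact absurd hk (not_lt.mpr (h.le.trans (H_gt_same hr hi h1 hsk).2))
      · exact absurd hk (asymm (H_gt_other hr hi h1 (fin2_resolve hsk hi)).2)
  have hsub2 : (univ.filter fun k => Cv r (Function.update s j i) k ≤ Cv r (Function.update s j i) j) ⊆
      univ.filter fun k => Cv r s k ≤ Cv r s j := by
    intro k hk
    simp only [mem_filter, mem_univ, true_and] at hk ⊢
    rcases lt_trichotomy k j with h1 | rfl | h1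
    · obtain ⟨e, _⟩ := H_lt hr hi h1
      rw [e] at hk
      exact hk.trans h.le
    · exact le_refl _
    · by_cases hsk : s k = s j
      · exact absurd hk (not_le.mpr (h.trans_le (H_gt_same hr hi h1 hsk).2))
      · exact absurd hk (not_le.mpr (H_gt_other hr hi h1 (fin2_resolve hsk hi)).2)
  have hN : Nv r (Function.update s j i) j ≤ Nv r s j :=
    add_le_add (card_le_card hsub1) (card_le_card hsub2)
  rw [ben_iff_N π hπ]
  rcases lt_or_eq_of_le hN with h' | h'
  · exact Or.inl h'
  · exact Or.inr ⟨h', h⟩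

lemma not_benef_of_gt (π : Fin n → ℕ) (hπ : StrictMono π) (hr : ∀ t, 0 < r t) (hi : i ≠ s j)
    (h : Cv r s j < Cv r (Function.update s j i) j) :
    ¬ Beneficial (fun _ => (1:ℝ)) r (fun _ => π) s j i := by
  have hsub1 : (univ.filter fun k => Cv r s k < Cv r s j) ⊆
      univ.filter fun k => Cv r (Function.update s j i) k < Cv r (Function.update s j i) j := by
    intro k hk
    simp only [mem_filter, mem_univ, true_and] at hk ⊢
    rcases lt_trichotomy k j with h1 | rfl | h1
    · obtain ⟨e, _⟩ := H_lt hr hi h1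
      rw [e]
      exact hk.trans h
    · exact absurd hk (lt_irrefl _)
    · by_cases hsk : s k = s j
      · exact absurd hk (asymm (H_gt_same hr hi h1 hsk).1)
      · exact absurd hk (not_lt.mpr (h.le.trans (H_gt_other hr hi h1 (fin2_resolve hsk hi)).1))
  have hsub2 : (univ.filter fun k => Cv r s k ≤ Cv r s j) ⊆
      univ.filter fun k => Cv r (Function.update s j i) k ≤ Cv r (Function.update s j i) j := by
    intro k hk
    simp only [mem_filter, mem_univ, true_and] at hk ⊢
    rcases lt_trichotomy k j with h1 | rfl | h1
    · obtain ⟨e, _⟩ := H_lt hr hi h1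
      rw [e]
      exact hk.trans h.le
    · exact le_refl _
    · by_cases hsk : s k = s j
      · exact absurd hk (not_le.mpr (H_gt_same hr hi h1 hsk).1)
      · exact absurd hk (not_le.mpr (h.trans_le (H_gt_other hr hi h1 (fin2_resolve hsk hi)).1))
  have hN : Nv r s j ≤ Nv r (Function.update s j i) j :=
    add_le_add (card_le_card hsub1) (card_le_card hsub2)
  rw [ben_iff_N π hπ]
  rintro (hlt | ⟨hN', hc⟩)
  · omega
  · exact absurd hc (asymm h)

end NEAux4

namespace NEAux5
open NEAux NEAux2 NEAux3 NEAux4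

variable {n : ℕ} {r : Fin 2 → ℝ} {s : Fin n → Fin 2} {j : Fin n} {i : Fin 2}

lemma benef_iff_of_eq (π : Fin n → ℕ) (hπ : StrictMono π) (hr : ∀ t, 0 < r t) (hi : i ≠ s j)
    (heq : Cv r (Function.update s j i) j = Cv r s j) :
    (Beneficial (fun _ => (1:ℝ)) r (fun _ => π) s j i ↔
      ((∃ k, s k = i ∧ j < k) ∧ ¬ ∃ k, s k = s j ∧ j < k)) := by
  classical
  set TB := univ.filter (fun k => s k = i ∧ j < k ∧ posC s k = Yc s i j + 1) with hTB
  set TA := univ.filter (fun k => s k = s j ∧ j < k ∧ posC s k = Xc s j + 2) with hTA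
  -- the two strict sets both equal {k | k < j}
  have e1 : (univ.filter fun k => Cv r s k < Cv r s j) = univ.filter (fun k : Fin n => k < j) := by
    ext k
    simp only [mem_filter, mem_univ, true_and]
    constructor
    · intro hk
      rcases lt_trichotomy k j with h1 | rfl | h1
      · exact h1
      · exact absurd hk (lt_irrefl _)
      · exfalso
        by_cases hsk : s k = s j
        · exact absurd hk (asymm (H_gt_same hr hi h1 hsk).1)
        · have h2 := (H_gt_other hr hi h1 (fin2_resolve hsk hi)).1
          rw [heq] at h2
          exact absurd hk (not_lt.mpr h2)
    · intro hk
      obtain ⟨e, d | d⟩ := H_lt hr hi hk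
      · exact d
      · rw [heq] at d
        exact d
  have e2 : (univ.filter fun k => Cv r (Function.update s j i) k < Cv r (Function.update s j i) j) =
      univ.filter (fun k : Fin n => k < j) := by
    ext k
    simp only [mem_filter, mem_univ, true_and]
    constructor
    · intro hk
      rcases lt_trichotomy k j with h1 | rfl | h1
      · exact h1
      · exact absurd hk (lt_irrefl _)
      · exfalso
        by_cases hsk : s k = s j
        · have h2 := (H_gt_same hr hi h1 hsk).2
          rw [← heq] at h2
          exact absurd hk (not_lt.mpr h2)
        · exact absurd hk (asymm (H_gt_other hr hi h1 (fin2_resolve hsk hi)).2)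
    · intro hk
      obtain ⟨e, d | d⟩ := H_lt hr hi hk
      · rw [e, heq]
        exact d
      · rw [e]
        exact d
  -- the weak sets
  have e3 : (univ.filter fun k => Cv r s k ≤ Cv r s j) =
      univ.filter (fun k : Fin n => k ≤ j) ∪ TB := by
    ext k
    simp only [hTB, mem_union, mem_filter, mem_univ, true_and]
    constructor
    · intro hk
      rcases lt_trichotomy k j with h1 | rfl | h1
      · exact Or.inl (le_of_lt h1)
      · exact Or.inl (le_refl _)
      · right
        by_cases hsk : s k = s j
        · exact absurd hk (not_le.mpr (H_gt_same hr hi h1 hsk).1)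
        · have hsk' : s k = i := fin2_resolve hsk hi
          have h2 := (H_gt_other hr hi h1 hsk').1
          have h3 : Cv r s k = Cv r (Function.update s j i) j :=
            le_antisymm (hk.trans heq.ge) h2
          rw [Cv_update_self hi] at h3
          unfold Cv at h3
          rw [hsk'] at h3
          have h4 : (posC s k : ℝ) = (Yc s i j : ℝ) + 1 := div_cancel_eq (hr i) h3
          exact ⟨hsk', h1, by exact_mod_cast h4⟩
    · rintro (hk | ⟨h1, h2, h3⟩)
      · rcases lt_or_eq_of_le hk with h1 | rfl
        · obtain ⟨e, d | d⟩ := H_lt hr hi h1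
          · exact le_of_lt d
          · rw [heq] at d
            exact le_of_lt d
        · exact le_refl _
      · have h5 : Cv r s k = ((Yc s i j : ℝ) + 1) / r i := by
          unfold Cv
          rw [h1, h3]
          push_cast
          ring
        have h6 : Cv r s k = Cv r s j := by
          rw [h5, ← Cv_update_self hi, heq]
        exact le_of_eq h6
  have e4 : (univ.filter fun k => Cv r (Function.update s j i) k ≤ Cv r (Function.update s j i) j) =
      univ.filter (fun k : Fin n => k ≤ j) ∪ TA := by
    ext k
    simp only [hTA, mem_union, mem_filter, mem_univ, true_and]
    constructor
    · intro hk
      rcases lt_trichotomy k j with h1 | rfl | h1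
      · exact Or.inl (le_of_lt h1)
      · exact Or.inl (le_refl _)
      · right
        by_cases hsk : s k = s j
        · have h2 := (H_gt_same hr hi h1 hsk).2
          have h3 : Cv r (Function.update s j i) k = Cv r s j :=
            le_antisymm (hk.trans heq.le) h2
          unfold Cv at h3
          rw [Function.update_of_ne (ne_of_gt h1), hsk] at h3
          have h4 : (posC (Function.update s j i) k : ℝ) = (posC s j : ℝ) :=
            div_cancel_eq (hr (s j)) h3
          have h5 : posC (Function.update s j i) k = posC s j := by exact_mod_cast h4
          have h6 := posC_update_gt_same s j i hi h1 hsk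
          have h7 := posC_eq_X s j
          exact ⟨hsk, h1, by omega⟩
        · exact absurd hk (not_le.mpr (H_gt_other hr hi h1 (fin2_resolve hsk hi)).2)
    · rintro (hk | ⟨h1, h2, h3⟩)
      · rcases lt_or_eq_of_le hk with h1 | rfl
        · obtain ⟨e, d | d⟩ := H_lt hr hi h1
          · rw [e, heq]
            exact le_of_lt d
          · rw [e]
            exact le_of_lt d
        · exact le_refl _
      · have h5 := posC_update_gt_same s j i hi h2 h1
        have h6 : posC (Function.update s j i) k = Xc s j + 1 := by omega
        have h7 : Cv r (Function.update s j i) k = Cv r s j := by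
          unfold Cv
          rw [Function.update_of_ne (ne_of_gt h2), h1, h6, posC_eq_X]
        rw [h7]
        exact heq.ge
  -- cardinalities of the trivial parts
  have hIic : (univ.filter (fun k : Fin n => k ≤ j)).card = j.val + 1 := by
    have : (univ.filter (fun k : Fin n => k ≤ j)) = Finset.Iic j := by
      ext k; simp
    rw [this, Fin.card_Iic]
  have hIio : (univ.filter (fun k : Fin n => k < j)).card = j.val := by
    have : (univ.filter (fun k : Fin n => k < j)) = Finset.Iio j := by
      ext k; simp
    rw [this, Fin.card_Iio]
  -- cardinalities of TB and TA
  have hTBle : TB.card ≤ 1 := by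
    rw [card_le_one]
    intro k1 hk1 k2 hk2
    by_contra hne
    have key : ∀ k1 k2 : Fin n, k1 ∈ TB → k2 ∈ TB → k1 < k2 → False := by
      intro k1 k2 h1 h2 hlt
      simp only [hTB, mem_filter, mem_univ, true_and] at h1 h2
      obtain ⟨h1i, h1j, h1p⟩ := h1
      obtain ⟨h2i, h2j, h2p⟩ := h2
      have hsub : insert k1 (insert k2 (univ.filter (fun m => s m = i ∧ m < j))) ⊆
          univ.filter (fun m => s m = s k2 ∧ m ≤ k2) := by
        intro m
        simp only [mem_insert, mem_filter, mem_univ, true_and]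
        rintro (rfl | rfl | ⟨hm1, hm2⟩)
        · exact ⟨h1i.trans h2i.symm, le_of_lt hlt⟩
        · exact ⟨rfl, le_refl _⟩
        · exact ⟨hm1.trans h2i.symm, le_of_lt (hm2.trans h2j)⟩
      have hcard := card_le_card hsub
      rw [card_insert_of_notMem (by simp [asymm h1j, ne_of_lt hlt]),
        card_insert_of_notMem (by simp [asymm h2j])] at hcard
      unfold posC Yc at h2p
      omega
    rcases lt_or_gt_of_ne hne with hlt | hlt
    · exact key k1 k2 hk1 hk2 hlt
    · exact key k2 k1 hk2 hk1 hlt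
  have hTAle : TA.card ≤ 1 := by
    rw [card_le_one]
    intro k1 hk1 k2 hk2
    by_contra hne
    have key : ∀ k1 k2 : Fin n, k1 ∈ TA → k2 ∈ TA → k1 < k2 → False := by
      intro k1 k2 h1 h2 hlt
      simp only [hTA, mem_filter, mem_univ, true_and] at h1 h2
      obtain ⟨h1i, h1j, h1p⟩ := h1
      obtain ⟨h2i, h2j, h2p⟩ := h2
      have hsub : insert j (insert k1 (insert k2 (univ.filter (fun m => s m = s j ∧ m < j)))) ⊆
          univ.filter (fun m => s m = s k2 ∧ m ≤ k2) := by
        intro m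
        simp only [mem_insert, mem_filter, mem_univ, true_and]
        rintro (rfl | rfl | rfl | ⟨hm1, hm2⟩)
        · exact ⟨h2i.symm, le_of_lt (h2j)⟩
        · exact ⟨h1i.trans h2i.symm, le_of_lt hlt⟩
        · exact ⟨rfl, le_refl _⟩
        · exact ⟨hm1.trans h2i.symm, le_of_lt (hm2.trans h2j)⟩
      have hcard := card_le_card hsub
      rw [card_insert_of_notMem (by simp [ne_of_lt h1j, ne_of_lt (h1j.trans hlt)]),
        card_insert_of_notMem (by simp [asymm h1j, ne_of_lt hlt]),
        card_insert_of_notMem (by simp [asymm h2j])] at hcard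
      unfold posC Xc at h2p
      omega
    rcases lt_or_gt_of_ne hne with hlt | hlt
    · exact key k1 k2 hk1 hk2 hlt
    · exact key k2 k1 hk2 hk1 hlt
  have hTBpos : (∃ k, s k = i ∧ j < k) → TB.Nonempty := by
    rintro hex
    set S := univ.filter (fun k => s k = i ∧ j < k) with hS
    have hSne : S.Nonempty := by
      obtain ⟨k, hk1, hk2⟩ := hex
      exact ⟨k, by simp [hS, hk1, hk2]⟩
    set k₀ := S.min' hSne with hk₀def
    have hmem := S.min'_mem hSne
    simp only [hS, mem_filter, mem_univ, true_and] at hmem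
    obtain ⟨hk0i, hk0j⟩ := hmem
    have hmin : ∀ m, s m = i → j < m → k₀ ≤ m := fun m h1 h2 =>
      S.min'_le m (by simp [hS, h1, h2])
    have hpos : posC s k₀ = Yc s i j + 1 := by
      unfold posC Yc
      have hset : (univ.filter (fun m => s m = s k₀ ∧ m ≤ k₀)) =
          insert k₀ (univ.filter (fun m => s m = i ∧ m < j)) := by
        ext m
        simp only [mem_insert, mem_filter, mem_univ, true_and]
        constructor
        · rintro ⟨h1, h2⟩
          rcases eq_or_ne m k₀ with rfl | hm
          · exact Or.inl rfl
          · right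
            have h1' : s m = i := h1.trans hk0i
            refine ⟨h1', ?_⟩
            by_contra hcon
            push_neg at hcon
            have hmj : m ≠ j := by
              intro hmj
              rw [hmj] at h1'
              exact hi h1'.symm
            have hjm : j < m := lt_of_le_of_ne hcon (Ne.symm hmj)
            exact hm (le_antisymm h2 (hmin m h1' hjm))
        · rintro (rfl | ⟨h1, h2⟩)
          · exact ⟨rfl, le_refl _⟩
          · exact ⟨h1.trans hk0i.symm, le_of_lt (h2.trans hk0j)⟩
      rw [hset, card_insert_of_notMem (by simp [asymm hk0j]; exact fun _ => le_of_lt hk0j)]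
    exact ⟨k₀, by simp [hTB, hk0i, hk0j, hpos]; exact ⟨hk0i, hk0j⟩⟩
  have hTApos : (∃ k, s k = s j ∧ j < k) → TA.Nonempty := by
    rintro hex
    set S := univ.filter (fun k => s k = s j ∧ j < k) with hS
    have hSne : S.Nonempty := by
      obtain ⟨k, hk1, hk2⟩ := hex
      exact ⟨k, by simp [hS, hk1, hk2]⟩
    set k₀ := S.min' hSne with hk₀def
    have hmem := S.min'_mem hSne
    simp only [hS, mem_filter, mem_univ, true_and] at hmem
    obtain ⟨hk0i, hk0j⟩ := hmem
    have hmin : ∀ m, s m = s j → j < m → k₀ ≤ m := fun m h1 h2 =>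
      S.min'_le m (by simp [hS, h1, h2])
    have hpos : posC s k₀ = Xc s j + 2 := by
      unfold posC Xc
      have hset : (univ.filter (fun m => s m = s k₀ ∧ m ≤ k₀)) =
          insert j (insert k₀ (univ.filter (fun m => s m = s j ∧ m < j))) := by
        ext m
        simp only [mem_insert, mem_filter, mem_univ, true_and]
        constructor
        · rintro ⟨h1, h2⟩
          rcases eq_or_ne m k₀ with rfl | hm
          · exact Or.inr (Or.inl rfl)
          · rcases eq_or_ne m j with rfl | hmj
            · exact Or.inl rfl
            · right; right
              have h1' : s m = s j := h1.trans hk0i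
              refine ⟨h1', ?_⟩
              by_contra hcon
              push_neg at hcon
              have hjm : j < m := lt_of_le_of_ne hcon (Ne.symm hmj)
              exact hm (le_antisymm h2 (hmin m h1' hjm))
        · rintro (rfl | rfl | ⟨h1, h2⟩)
          · exact ⟨hk0i.symm, le_of_lt hk0j⟩
          · exact ⟨rfl, le_refl _⟩
          · exact ⟨h1.trans hk0i.symm, le_of_lt (h2.trans hk0j)⟩
      rw [hset, card_insert_of_notMem (by simp [ne_of_lt hk0j]; exact ne_of_lt hk0j),
        card_insert_of_notMem (by simp [asymm hk0j]; exact fun _ => le_of_lt hk0j)]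
    exact ⟨k₀, by simp [hTA, hk0i, hk0j, hpos]; exact ⟨hk0i, hk0j⟩⟩
  have hTBex : TB.Nonempty → (∃ k, s k = i ∧ j < k) := by
    rintro ⟨k, hk⟩
    simp only [hTB, mem_filter, mem_univ, true_and] at hk
    exact ⟨k, hk.1, hk.2.1⟩
  have hTAex : TA.Nonempty → (∃ k, s k = s j ∧ j < k) := by
    rintro ⟨k, hk⟩
    simp only [hTA, mem_filter, mem_univ, true_and] at hk
    exact ⟨k, hk.1, hk.2.1⟩
  -- disjointness
  have hdB : Disjoint (univ.filter (fun k : Fin n => k ≤ j)) TB := by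
    simp only [disjoint_left, mem_filter, mem_univ, true_and, hTB]
    intro k hk h2
    exact absurd h2.2.1 (not_lt.mpr hk)
  have hdA : Disjoint (univ.filter (fun k : Fin n => k ≤ j)) TA := by
    simp only [disjoint_left, mem_filter, mem_univ, true_and, hTA]
    intro k hk h2
    exact absurd h2.2.1 (not_lt.mpr hk)
  -- assemble
  have hNold : Nv r s j = j.val + ((j.val + 1) + TB.card) := by
    unfold Nv
    rw [e1, e3, card_union_of_disjoint hdB, hIio, hIic]
  have hNnew : Nv r (Function.update s j i) j = j.val + ((j.val + 1) + TA.card) := by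
    unfold Nv
    rw [e2, e4, card_union_of_disjoint hdA, hIio, hIic]
  rw [ben_iff_N π hπ]
  constructor
  · rintro (hlt | ⟨hNeq, hc⟩)
    · rw [hNold, hNnew] at hlt
      have hcc : TA.card < TB.card := by omega
      have hB : TB.Nonempty := card_pos.mp (by omega)
      have hA : TA.card = 0 := by omega
      refine ⟨hTBex hB, fun hex => ?_⟩
      have := hTApos hex
      rw [← card_pos, hA] at this
      exact lt_irrefl _ this
    · rw [heq] at hc
      exact absurd hc (lt_irrefl _)
  · rintro ⟨hB, hA⟩
    left
    rw [hNold, hNnew]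
    have h1 : TB.Nonempty := hTBpos hB
    have h2 : TA.card = 0 := by
      by_contra hc
      exact hA (hTAex (card_pos.mp (by omega)))
    have h3 : 0 < TB.card := card_pos.mpr h1
    omega

end NEAux5

namespace NEAux6
open NEAux NEAux2 NEAux3 NEAux4 NEAux5

variable {n : ℕ} {r : Fin 2 → ℝ} {s : Fin n → Fin 2} {j : Fin n} {i : Fin 2}

theorem char (π : Fin n → ℕ) (hπ : StrictMono π) (hr : ∀ t, 0 < r t) (hi : i ≠ s j) :
    Beneficial (fun _ => (1:ℝ)) r (fun _ => π) s j i ↔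
      (Cv r (Function.update s j i) j < Cv r s j ∨
        (Cv r (Function.update s j i) j = Cv r s j ∧
          (∃ k, s k = i ∧ j < k) ∧ ¬ ∃ k, s k = s j ∧ j < k)) := by
  rcases lt_trichotomy (Cv r (Function.update s j i) j) (Cv r s j) with h | h | h
  · exact iff_of_true (benef_of_lt π hπ hr hi h) (Or.inl h)
  · rw [benef_iff_of_eq π hπ hr hi h]
    constructor
    · intro hx
      exact Or.inr ⟨h, hx⟩
    · rintro (hlt | ⟨_, hx⟩)
      · rw [h] at hlt
        exact absurd hlt (lt_irrefl _)
      · exact hx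
  · apply iff_of_false (not_benef_of_gt π hπ hr hi h)
    rintro (hlt | ⟨he, _⟩)
    · exact absurd hlt (asymm h)
    · exact absurd he (ne_of_gt h)

theorem not_benef_self {J M : Type*} [Fintype J] (p : J → ℝ) (r : M → ℝ) (π₂ : M → J → ℕ)
    (s : J → M) (j : J) : ¬ Beneficial p r π₂ s j (s j) := by
  unfold Beneficial
  rw [Function.update_eq_self]
  rintro (h | ⟨_, h⟩) <;> exact lt_irrefl _ h

lemma nat_div_lt {p q a b : ℕ} (ha : 0 < a) (hb : 0 < b) :
    ((p:ℝ)) / ((a:ℝ)/(b:ℝ)) < (q:ℝ) ↔ b * p < a * q := by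
  rw [div_div_eq_mul_div, div_lt_iff₀ (by exact_mod_cast ha : (0:ℝ) < (a:ℝ))]
  constructor
  · intro h
    have h3 : ((b * p : ℕ) : ℝ) < ((a * q : ℕ) : ℝ) := by push_cast; linarith
    exact_mod_cast h3
  · intro h
    have h3 : ((b * p : ℕ) : ℝ) < ((a * q : ℕ) : ℝ) := by exact_mod_cast h
    push_cast at h3; linarith

lemma nat_lt_div {p q a b : ℕ} (ha : 0 < a) (hb : 0 < b) :
    (q:ℝ) < ((p:ℝ)) / ((a:ℝ)/(b:ℝ)) ↔ a * q < b * p := by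
  rw [div_div_eq_mul_div, lt_div_iff₀ (by exact_mod_cast ha : (0:ℝ) < (a:ℝ))]
  constructor
  · intro h
    have h3 : ((a * q : ℕ) : ℝ) < ((b * p : ℕ) : ℝ) := by push_cast; linarith
    exact_mod_cast h3
  · intro h
    have h3 : ((a * q : ℕ) : ℝ) < ((b * p : ℕ) : ℝ) := by exact_mod_cast h
    push_cast at h3; linarith

lemma nat_div_eq {p q a b : ℕ} (ha : 0 < a) (hb : 0 < b) :
    ((p:ℝ)) / ((a:ℝ)/(b:ℝ)) = (q:ℝ) ↔ b * p = a * q := by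
  rw [div_div_eq_mul_div, div_eq_iff (by positivity : ((a:ℝ)) ≠ 0)]
  constructor
  · intro h
    have h3 : ((b * p : ℕ) : ℝ) = ((a * q : ℕ) : ℝ) := by push_cast; linarith
    exact_mod_cast h3
  · intro h
    have h3 : ((b * p : ℕ) : ℝ) = ((a * q : ℕ) : ℝ) := by exact_mod_cast h
    push_cast at h3; linarith

def NEcond (a b : ℕ) (s : Fin n → Fin 2) : Prop := ∀ j : Fin n,
  (s j = 0 → a * (Xc s j + 1) ≤ b * (Yc s 1 j + 1) ∧
    (a * (Xc s j + 1) = b * (Yc s 1 j + 1) →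
      ((∃ k, s k = 0 ∧ j < k) ∨ ¬ ∃ k, s k = 1 ∧ j < k))) ∧
  (s j = 1 → b * (Xc s j + 1) ≤ a * (Yc s 0 j + 1) ∧
    (b * (Xc s j + 1) = a * (Yc s 0 j + 1) →
      ((∃ k, s k = 1 ∧ j < k) ∨ ¬ ∃ k, s k = 0 ∧ j < k)))

section Specific

variable (a b : ℕ)

lemma hr_spec (ha : 0 < a) (hb : 0 < b) : ∀ t : Fin 2, 0 < (![1, (a:ℝ)/(b:ℝ)]) t := by
  intro t
  fin_cases t
  · norm_num
  · simp only [Matrix.cons_val_one, Matrix.head_cons]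
    exact div_pos (by exact_mod_cast ha) (by exact_mod_cast hb)

lemma not_benef_iff0 (ha : 0 < a) (hb : 0 < b) (π : Fin n → ℕ) (hπ : StrictMono π)
    (h0 : s j = 0) :
    ¬ Beneficial (fun _ => (1:ℝ)) (![1, (a:ℝ)/(b:ℝ)]) (fun _ => π) s j 1 ↔
      (a * (Xc s j + 1) ≤ b * (Yc s 1 j + 1) ∧
        (a * (Xc s j + 1) = b * (Yc s 1 j + 1) →
          ((∃ k, s k = 0 ∧ j < k) ∨ ¬ ∃ k, s k = 1 ∧ j < k))) := by
  have hi : (1 : Fin 2) ≠ s j := by rw [h0]; decide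
  rw [char π hπ (hr_spec a b ha hb) hi, Cv_update_self hi, Cv_formula, h0]
  simp only [Matrix.cons_val_one, Matrix.head_cons, Matrix.cons_val_zero, div_one]
  have e1 : ((Yc s 1 j : ℝ) + 1) = ((Yc s 1 j + 1 : ℕ) : ℝ) := by push_cast; ring
  have e2 : ((Xc s j : ℝ) + 1) = ((Xc s j + 1 : ℕ) : ℝ) := by push_cast; ring
  rw [e1, e2, nat_div_lt ha hb, nat_div_eq ha hb,
    show (b * (Yc s 1 j + 1) = a * (Xc s j + 1)) ↔ (a * (Xc s j + 1) = b * (Yc s 1 j + 1))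
      from eq_comm]
  rw [not_or, not_lt]
  constructor
  · rintro ⟨hle, hrest⟩
    refine ⟨hle, fun heqn => ?_⟩
    by_contra hcon
    rw [not_or, not_not] at hcon
    exact hrest ⟨heqn, hcon.2, hcon.1⟩
  · rintro ⟨hle, hrest⟩
    refine ⟨hle, ?_⟩
    rintro ⟨heqn, hB, hA⟩
    rcases hrest heqn with hx | hx
    · exact hA hx
    · exact hx hB

lemma not_benef_iff1 (ha : 0 < a) (hb : 0 < b) (π : Fin n → ℕ) (hπ : StrictMono π)
    (h1 : s j = 1) :
    ¬ Beneficial (fun _ => (1:ℝ)) (![1, (a:ℝ)/(b:ℝ)]) (fun _ => π) s j 0 ↔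
      (b * (Xc s j + 1) ≤ a * (Yc s 0 j + 1) ∧
        (b * (Xc s j + 1) = a * (Yc s 0 j + 1) →
          ((∃ k, s k = 1 ∧ j < k) ∨ ¬ ∃ k, s k = 0 ∧ j < k))) := by
  have hi : (0 : Fin 2) ≠ s j := by rw [h1]; decide
  rw [char π hπ (hr_spec a b ha hb) hi, Cv_update_self hi, Cv_formula, h1]
  simp only [Matrix.cons_val_one, Matrix.head_cons, Matrix.cons_val_zero, div_one]
  have e1 : ((Yc s 0 j : ℝ) + 1) = ((Yc s 0 j + 1 : ℕ) : ℝ) := by push_cast; ring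
  have e2 : ((Xc s j : ℝ) + 1) = ((Xc s j + 1 : ℕ) : ℝ) := by push_cast; ring
  rw [e1, e2, nat_lt_div ha hb,
    show (((Yc s 0 j + 1 : ℕ) : ℝ) = ((Xc s j + 1 : ℕ):ℝ) / ((a:ℝ)/(b:ℝ))) ↔
      ((((Xc s j + 1 : ℕ)):ℝ) / ((a:ℝ)/(b:ℝ)) = ((Yc s 0 j + 1 : ℕ):ℝ)) from eq_comm,
    nat_div_eq ha hb]
  rw [not_or, not_lt]
  constructor
  · rintro ⟨hle, hrest⟩
    refine ⟨hle, fun heqn => ?_⟩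
    by_contra hcon
    rw [not_or, not_not] at hcon
    exact hrest ⟨heqn, hcon.2, hcon.1⟩
  · rintro ⟨hle, hrest⟩
    refine ⟨hle, ?_⟩
    rintro ⟨heqn, hB, hA⟩
    rcases hrest heqn with hx | hx
    · exact hA hx
    · exact hx hB

theorem isNE_iff (ha : 0 < a) (hb : 0 < b) (π : Fin n → ℕ) (hπ : StrictMono π)
    (s : Fin n → Fin 2) :
    IsNE (fun _ => (1:ℝ)) (![1, (a:ℝ)/(b:ℝ)]) (fun _ => π) s ↔ NEcond a b s := by
  constructor
  · intro hNE j
    constructor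
    · intro h0
      exact (not_benef_iff0 a b ha hb π hπ h0).mp (hNE j 1)
    · intro h1
      exact (not_benef_iff1 a b ha hb π hπ h1).mp (hNE j 0)
  · intro hC j i
    rcases eq_or_ne i (s j) with rfl | hi
    · exact not_benef_self _ _ _ _ _
    · have h01 : s j = 0 ∨ s j = 1 := by
        have hx2 : ∀ x : Fin 2, x = 0 ∨ x = 1 := by decide
        exact hx2 (s j)
      rcases h01 with h0 | h1
      · have hi1 : i = 1 := by
          fin_cases i <;> simp_all
        rw [hi1]
        exact (not_benef_iff0 a b ha hb π hπ h0).mpr ((hC j).1 h0)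
      · have hi0 : i = 0 := by
          fin_cases i <;> simp_all
        rw [hi0]
        exact (not_benef_iff1 a b ha hb π hπ h1).mpr ((hC j).2 h1)

end Specific
end NEAux6

namespace NEComb
open NEAux NEAux6

variable {n : ℕ}

def cnt (s : Fin n → Fin 2) (i : Fin 2) (t : ℕ) : ℕ :=
  (univ.filter (fun k : Fin n => k.val < t ∧ s k = i)).card

lemma cnt_zero (s : Fin n → Fin 2) (i : Fin 2) : cnt s i 0 = 0 := by
  simp [cnt]

lemma cnt_succ (s : Fin n → Fin 2) (i : Fin 2) (t : ℕ) (ht : t < n) :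
    cnt s i (t + 1) = cnt s i t + (if s ⟨t, ht⟩ = i then 1 else 0) := by
  unfold cnt
  split_ifs with h
  · have hset : (univ.filter (fun k : Fin n => k.val < t + 1 ∧ s k = i)) =
        insert ⟨t, ht⟩ (univ.filter (fun k : Fin n => k.val < t ∧ s k = i)) := by
      ext k
      simp only [mem_insert, mem_filter, mem_univ, true_and]
      constructor
      · rintro ⟨h1, h2⟩
        rcases eq_or_ne k.val t with he | hne
        · exact Or.inl (Fin.ext he)
        · exact Or.inr ⟨by omega, h2⟩
      · rintro (rfl | ⟨h1, h2⟩)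
        · exact ⟨Nat.lt_succ_self t, h⟩
        · exact ⟨by omega, h2⟩
    rw [hset, card_insert_of_notMem (by simp)]
  · have hset : (univ.filter (fun k : Fin n => k.val < t + 1 ∧ s k = i)) =
        (univ.filter (fun k : Fin n => k.val < t ∧ s k = i)) := by
      ext k
      simp only [mem_filter, mem_univ, true_and]
      constructor
      · rintro ⟨h1, h2⟩
        rcases eq_or_ne k.val t with he | hne
        · exact absurd h2 (by rw [show k = (⟨t, ht⟩ : Fin n) from Fin.ext he]; exact h)
        · exact ⟨by omega, h2⟩
      · rintro ⟨h1, h2⟩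
        exact ⟨by omega, h2⟩
    rw [hset]
    omega

lemma cnt_total (s : Fin n → Fin 2) (t : ℕ) (ht : t ≤ n) :
    cnt s 0 t + cnt s 1 t = t := by
  induction t with
  | zero => simp [cnt_zero]
  | succ t ih =>
    have htn : t < n := by omega
    have iht := ih (by omega)
    rw [cnt_succ s 0 t htn, cnt_succ s 1 t htn]
    have h01 : ∀ x : Fin 2, x = 0 ∨ x = 1 := by decide
    rcases h01 (s ⟨t, htn⟩) with h | h
    · rw [if_pos h, if_neg (by rw [h]; decide)]
      omega
    · rw [if_neg (by rw [h]; decide), if_pos h]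
      omega

lemma Xc_eq_cnt (s : Fin n → Fin 2) (j : Fin n) : Xc s j = cnt s (s j) j.val := by
  unfold Xc cnt
  congr 1
  ext k
  simp only [mem_filter, mem_univ, true_and, Fin.lt_def]
  tauto

lemma Yc_eq_cnt (s : Fin n → Fin 2) (i : Fin 2) (j : Fin n) : Yc s i j = cnt s i j.val := by
  unfold Yc cnt
  congr 1
  ext k
  simp only [mem_filter, mem_univ, true_and, Fin.lt_def]
  tauto

theorem invariant (a b : ℕ) (s : Fin n → Fin 2) (hC : NEcond a b s) :
    ∀ t, t ≤ n →
      a * cnt s 0 t ≤ b * cnt s 1 t + b ∧ b * cnt s 1 t ≤ a * cnt s 0 t + a := by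
  have h01 : ∀ x : Fin 2, x = 0 ∨ x = 1 := by decide
  intro t
  induction t with
  | zero =>
    intro _
    simp [cnt_zero]
  | succ t ih =>
    intro ht
    have htn : t < n := by omega
    have iht := ih (by omega)
    rw [cnt_succ s 0 t htn, cnt_succ s 1 t htn]
    have e1 : a * (cnt s 0 t + 1) = a * cnt s 0 t + a := by ring
    have e2 : b * (cnt s 1 t + 1) = b * cnt s 1 t + b := by ring
    have hjv : ((⟨t, htn⟩ : Fin n) : ℕ) = t := rfl
    rcases h01 (s ⟨t, htn⟩) with h0 | h1
    · have hcond := ((hC ⟨t, htn⟩).1 h0).1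
      rw [Xc_eq_cnt, Yc_eq_cnt, h0, hjv] at hcond
      rw [if_pos h0, if_neg (by rw [h0]; decide)]
      simp only [Nat.add_zero]
      constructor
      · linarith [hcond, e2]
      · linarith [iht.2, e1]
    · have hcond := ((hC ⟨t, htn⟩).2 h1).1
      rw [Xc_eq_cnt, Yc_eq_cnt, h1, hjv] at hcond
      rw [if_neg (by rw [h1]; decide), if_pos h1]
      simp only [Nat.add_zero]
      constructor
      · linarith [iht.1, e2]
      · linarith [hcond, e1]

theorem no_NE (a b : ℕ) (ha : 0 < a) (hb : 0 < b) (ℓ : ℕ) (hl : 1 ≤ ℓ)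
    (hn : n = ℓ * (a + b)) (s : Fin n → Fin 2) (hC : NEcond a b s) : False := by
  have h01 : ∀ x : Fin 2, x = 0 ∨ x = 1 := by decide
  have inv := invariant a b s hC
  have hfin := inv n (le_refl n)
  have htot := cnt_total s n (le_refl n)
  have hx : cnt s 0 n = ℓ * b := by
    have e2 : b * cnt s 0 n + b * cnt s 1 n = b * n := by
      calc b * cnt s 0 n + b * cnt s 1 n = b * (cnt s 0 n + cnt s 1 n) := by ring
      _ = b * n := by rw [htot]
    have e3 : b * n = (a+b) * (ℓ*b) := by rw [hn]; ring
    have e : (a+b) * cnt s 0 n = a * cnt s 0 n + b * cnt s 0 n := by ring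
    have h1 : (a+b) * cnt s 0 n ≤ (a+b) * (ℓ*b) + b := by
      linarith [hfin.1]
    have h2 : (a+b) * (ℓ*b) ≤ (a+b) * cnt s 0 n + a := by
      linarith [hfin.2]
    have h3 : (a+b) * cnt s 0 n < (a+b) * (ℓ*b + 1) := by
      have e4 : (a+b) * (ℓ*b+1) = (a+b)*(ℓ*b) + (a+b) := by ring
      linarith
    have h4 : (a+b) * (ℓ*b) < (a+b) * (cnt s 0 n + 1) := by
      have e4 : (a+b)*(cnt s 0 n + 1) = (a+b)*(cnt s 0 n) + (a+b) := by ring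
      linarith
    have h5 := Nat.lt_of_mul_lt_mul_left h3
    have h6 := Nat.lt_of_mul_lt_mul_left h4
    omega
  have hy : cnt s 1 n = ℓ * a := by
    have e : ℓ * (a+b) = ℓ*a + ℓ*b := by ring
    linarith [htot, hx]
  have hn2 : 2 ≤ n := by
    have h2ab : 2 ≤ a + b := by omega
    calc 2 ≤ a + b := h2ab
    _ ≤ ℓ * (a+b) := Nat.le_mul_of_pos_left _ hl
    _ = n := hn.symm
  obtain ⟨j1, hj1v⟩ : ∃ j1 : Fin n, (j1:ℕ) = n - 1 := ⟨⟨n-1, by omega⟩, rfl⟩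
  obtain ⟨j2, hj2v⟩ : ∃ j2 : Fin n, (j2:ℕ) = n - 2 := ⟨⟨n-2, by omega⟩, rfl⟩
  have hs1 : ∀ i, cnt s i n = cnt s i (n-1) + (if s j1 = i then 1 else 0) := by
    intro i
    have h' : n - 1 < n := by omega
    have h := cnt_succ s i (n-1) h'
    rw [show n-1+1 = n from by omega] at h
    rw [show (⟨n-1, h'⟩ : Fin n) = j1 from Fin.ext (by rw [hj1v])] at h
    exact h
  have hs2 : ∀ i, cnt s i (n-1) = cnt s i (n-2) + (if s j2 = i then 1 else 0) := by
    intro i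
    have h' : n - 2 < n := by omega
    have h := cnt_succ s i (n-2) h'
    rw [show n-2+1 = n-1 from by omega] at h
    rw [show (⟨n-2, h'⟩ : Fin n) = j2 from Fin.ext (by rw [hj2v])] at h
    exact h
  have hlt21 : j2 < j1 := by
    rw [Fin.lt_def, hj1v, hj2v]
    omega
  have honly : ∀ k : Fin n, j2 < k → k = j1 := by
    intro k hk
    rw [Fin.lt_def, hj2v] at hk
    have h1 := k.isLt
    apply Fin.ext
    rw [hj1v]
    omega
  have hinv2 := inv (n-2) (by omega)
  rcases h01 (s j2) with h20 | h21 <;> rcases h01 (s j1) with h10 | h11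
  · -- both last jobs on machine 0
    have c0 : cnt s 0 n = cnt s 0 (n-2) + 2 := by
      have a1 := hs1 0
      have a2 := hs2 0
      rw [if_pos h10] at a1
      rw [if_pos h20] at a2
      omega
    have c1 : cnt s 1 n = cnt s 1 (n-2) := by
      have a1 := hs1 1
      have a2 := hs2 1
      rw [if_neg (by rw [h10]; decide)] at a1
      rw [if_neg (by rw [h20]; decide)] at a2
      omega
    have e1 : cnt s 1 (n-2) = ℓ * a := c1.symm.trans hy
    have e0 : cnt s 0 (n-2) + 2 = ℓ * b := by rw [← hx, c0]
    have hlast := hinv2.2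
    rw [e1] at hlast
    have e3 : a * (cnt s 0 (n-2) + 2) = a * (ℓ*b) := by rw [e0]
    have e4 : a * (cnt s 0 (n-2) + 2) = a * cnt s 0 (n-2) + 2*a := by ring
    have emul : a * (ℓ*b) = b * (ℓ*a) := by ring
    linarith
  · -- j2 on 0, j1 on 1 : tie contradiction
    have c0 : cnt s 0 n = cnt s 0 (n-2) + 1 := by
      have a1 := hs1 0
      have a2 := hs2 0
      rw [if_neg (by rw [h11]; decide)] at a1
      rw [if_pos h20] at a2
      omega
    have c1 : cnt s 1 n = cnt s 1 (n-2) + 1 := by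
      have a1 := hs1 1
      have a2 := hs2 1
      rw [if_pos h11] at a1
      rw [if_neg (by rw [h20]; decide)] at a2
      omega
    have e0 : cnt s 0 (n-2) + 1 = ℓ * b := by rw [← hx, c0]
    have e1 : cnt s 1 (n-2) + 1 = ℓ * a := by rw [← hy, c1]
    have hcond := ((hC j2).1 h20).2
    rw [Xc_eq_cnt, Yc_eq_cnt, h20, show (j2:ℕ) = n-2 from hj2v] at hcond
    have heqn : a * (cnt s 0 (n-2) + 1) = b * (cnt s 1 (n-2) + 1) := by
      rw [e0, e1]; ring
    rcases hcond heqn with ⟨k, hk0, hkgt⟩ | hno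
    · rw [honly k hkgt, h11] at hk0
      exact absurd hk0 (by decide)
    · exact hno ⟨j1, h11, hlt21⟩
  · -- j2 on 1, j1 on 0 : tie contradiction
    have c0 : cnt s 0 n = cnt s 0 (n-2) + 1 := by
      have a1 := hs1 0
      have a2 := hs2 0
      rw [if_pos h10] at a1
      rw [if_neg (by rw [h21]; decide)] at a2
      omega
    have c1 : cnt s 1 n = cnt s 1 (n-2) + 1 := by
      have a1 := hs1 1
      have a2 := hs2 1
      rw [if_neg (by rw [h10]; decide)] at a1
      rw [if_pos h21] at a2
      omega
    have e0 : cnt s 0 (n-2) + 1 = ℓ * b := by rw [← hx, c0]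
    have e1 : cnt s 1 (n-2) + 1 = ℓ * a := by rw [← hy, c1]
    have hcond := ((hC j2).2 h21).2
    rw [Xc_eq_cnt, Yc_eq_cnt, h21, show (j2:ℕ) = n-2 from hj2v] at hcond
    have heqn : b * (cnt s 1 (n-2) + 1) = a * (cnt s 0 (n-2) + 1) := by
      rw [e0, e1]; ring
    rcases hcond heqn with ⟨k, hk1, hkgt⟩ | hno
    · rw [honly k hkgt, h10] at hk1
      exact absurd hk1 (by decide)
    · exact hno ⟨j1, h10, hlt21⟩
  · -- both on machine 1
    have c0 : cnt s 0 n = cnt s 0 (n-2) := by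
      have a1 := hs1 0
      have a2 := hs2 0
      rw [if_neg (by rw [h11]; decide)] at a1
      rw [if_neg (by rw [h21]; decide)] at a2
      omega
    have c1 : cnt s 1 n = cnt s 1 (n-2) + 2 := by
      have a1 := hs1 1
      have a2 := hs2 1
      rw [if_pos h11] at a1
      rw [if_pos h21] at a2
      omega
    have e0 : cnt s 0 (n-2) = ℓ * b := c0.symm.trans hx
    have e1 : cnt s 1 (n-2) + 2 = ℓ * a := by rw [← hy, c1]
    have hlast := hinv2.1
    rw [e0] at hlast
    have e3 : b * (cnt s 1 (n-2) + 2) = b * (ℓ*a) := by rw [e1]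
    have e4 : b * (cnt s 1 (n-2) + 2) = b * cnt s 1 (n-2) + 2*b := by ring
    have emul : a * (ℓ*b) = b * (ℓ*a) := by ring
    linarith

end NEComb

namespace NEGreedy
open NEAux NEAux6 NEComb

def gX (a b : ℕ) : ℕ → ℕ × ℕ
  | 0 => (0, 0)
  | t+1 =>
    let p := gX a b t
    if a * (p.1 + 1) ≤ b * (p.2 + 1) then (p.1 + 1, p.2) else (p.1, p.2 + 1)

def gs (a b n : ℕ) : Fin n → Fin 2 := fun j =>
  if a * ((gX a b j.val).1 + 1) ≤ b * ((gX a b j.val).2 + 1) then 0 else 1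

lemma gX_succ (a b t : ℕ) : gX a b (t+1) =
    if a * ((gX a b t).1 + 1) ≤ b * ((gX a b t).2 + 1)
      then ((gX a b t).1 + 1, (gX a b t).2) else ((gX a b t).1, (gX a b t).2 + 1) := by
  rfl

lemma gX_sum (a b : ℕ) (t : ℕ) : (gX a b t).1 + (gX a b t).2 = t := by
  induction t with
  | zero => rfl
  | succ t ih =>
    rw [gX_succ]
    split_ifs with h <;> simp <;> omega

lemma gs_eq_zero_iff (a b n : ℕ) (j : Fin n) :
    gs a b n j = 0 ↔ a * ((gX a b j.val).1 + 1) ≤ b * ((gX a b j.val).2 + 1) := by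
  unfold gs
  split_ifs with h
  · exact iff_of_true rfl h
  · exact iff_of_false (by decide) h

lemma gs_cnt (a b n : ℕ) : ∀ t, t ≤ n →
    cnt (gs a b n) 0 t = (gX a b t).1 ∧ cnt (gs a b n) 1 t = (gX a b t).2 := by
  intro t
  induction t with
  | zero =>
    intro _
    constructor <;> rw [cnt_zero] <;> rfl
  | succ t ih =>
    intro ht
    have htn : t < n := by omega
    obtain ⟨i0, i1⟩ := ih (by omega)
    rw [cnt_succ _ 0 t htn, cnt_succ _ 1 t htn, i0, i1, gX_succ]
    have hjv : ((⟨t, htn⟩ : Fin n) : ℕ) = t := rfl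
    by_cases h : a * ((gX a b t).1 + 1) ≤ b * ((gX a b t).2 + 1)
    · have h0 : gs a b n ⟨t, htn⟩ = 0 := by
        unfold gs
        rw [hjv]
        exact if_pos h
      rw [if_pos h, if_pos h0, if_neg (by rw [h0]; decide)]
      constructor <;> simp
    · have h1 : gs a b n ⟨t, htn⟩ = 1 := by
        unfold gs
        rw [hjv]
        exact if_neg h
      rw [if_neg h, if_neg (by rw [h1]; decide), if_pos h1]
      constructor <;> simp

theorem exists_NE (a b ℓ c n : ℕ) (ha : 0 < a) (hab : a ≤ b) (hco : Nat.Coprime a b)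
    (hn : n = ℓ * (a + b) + c) (hclt : c < a + b) (hc : c ≠ 0) :
    NEcond a b (gs a b n) := by
  have hb : 0 < b := lt_of_lt_of_le ha hab
  intro j
  have hjle : (j:ℕ) ≤ n := le_of_lt j.isLt
  obtain ⟨i0, i1⟩ := gs_cnt a b n j.val hjle
  constructor
  · intro h0
    have hcond : a * ((gX a b j.val).1 + 1) ≤ b * ((gX a b j.val).2 + 1) :=
      (gs_eq_zero_iff a b n j).mp h0
    have hXc : Xc (gs a b n) j = (gX a b j.val).1 := by
      rw [Xc_eq_cnt, h0, i0]
    have hYc : Yc (gs a b n) 1 j = (gX a b j.val).2 := by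
      rw [Yc_eq_cnt, i1]
    rw [hXc, hYc]
    refine ⟨hcond, ?_⟩
    intro heqn
    have hdvd : b ∣ ((gX a b j.val).1 + 1) := by
      have hd : b ∣ a * ((gX a b j.val).1 + 1) := ⟨(gX a b j.val).2 + 1, heqn⟩
      exact Nat.Coprime.dvd_of_dvd_mul_left hco.symm hd
    obtain ⟨q, hq⟩ := hdvd
    have hq1 : 1 ≤ q := by
      rcases Nat.eq_zero_or_pos q with rfl | h
      · omega
      · exact h
    have hy1 : (gX a b j.val).2 + 1 = a * q := by
      have h2 : b * (a * q) = b * ((gX a b j.val).2 + 1) := by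
        calc b * (a*q) = a * (b*q) := by ring
        _ = a * ((gX a b j.val).1 + 1) := by rw [hq]
        _ = b * ((gX a b j.val).2 + 1) := heqn
      exact (Nat.eq_of_mul_eq_mul_left hb h2).symm
    have htval : j.val + 2 = q * (a + b) := by
      have hsum := gX_sum a b j.val
      have e : q * (a+b) = a*q + b*q := by ring
      omega
    rcases lt_trichotomy (j.val + 2) n with hlt | heqn2 | hgt
    · left
      have g1 : gX a b (j.val + 1) = ((gX a b j.val).1 + 1, (gX a b j.val).2) := by
        rw [gX_succ, if_pos hcond]
      have hstrict : ¬ (a * ((gX a b (j.val+1)).1 + 1) ≤ b * ((gX a b (j.val+1)).2 + 1)) := by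
        rw [g1]
        intro hcontra
        simp only [] at hcontra
        have e1 : a * ((gX a b j.val).1 + 1 + 1) = a * ((gX a b j.val).1 + 1) + a := by ring
        omega
      have g2 : gX a b (j.val + 2) = ((gX a b j.val).1 + 1, (gX a b j.val).2 + 1) := by
        have hsucc := gX_succ a b (j.val+1)
        rw [if_neg hstrict] at hsucc
        rw [show j.val + 2 = j.val + 1 + 1 from rfl, hsucc, g1]
      refine ⟨⟨j.val + 2, hlt⟩, ?_, ?_⟩
      · apply (gs_eq_zero_iff a b n _).mpr
        have hv : ((⟨j.val+2, hlt⟩ : Fin n) : ℕ) = j.val + 2 := rfl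
        rw [hv, g2]
        simp only []
        have e1 : a * ((gX a b j.val).1 + 1 + 1) = a * ((gX a b j.val).1 + 1) + a := by ring
        have e2 : b * ((gX a b j.val).2 + 1 + 1) = b * ((gX a b j.val).2 + 1) + b := by ring
        omega
      · have hx2 : (j:ℕ) < j.val + 2 := by omega
        exact hx2
    · exfalso
      have hnq : n = q * (a+b) := by omega
      rcases le_or_gt q ℓ with hq2 | hq2
      · have hmul : q * (a+b) ≤ ℓ * (a+b) := Nat.mul_le_mul_right _ hq2
        omega
      · have hmul : (ℓ+1) * (a+b) ≤ q * (a+b) := Nat.mul_le_mul_right _ hq2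
        have e1 : (ℓ+1) * (a+b) = ℓ * (a+b) + (a+b) := by ring
        omega
    · right
      rintro ⟨k, hk1, hkgt⟩
      rw [Fin.lt_def] at hkgt
      have hkn := k.isLt
      omega
  · intro h1
    have hcond : ¬ (a * ((gX a b j.val).1 + 1) ≤ b * ((gX a b j.val).2 + 1)) := by
      intro hcontra
      have h0 := (gs_eq_zero_iff a b n j).mpr hcontra
      exact absurd (h1.symm.trans h0) (by decide)
    have hXc : Xc (gs a b n) j = (gX a b j.val).2 := by
      rw [Xc_eq_cnt, h1, i1]
    have hYc : Yc (gs a b n) 0 j = (gX a b j.val).1 := by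
      rw [Yc_eq_cnt, i0]
    rw [hXc, hYc]
    constructor
    · omega
    · intro heqn
      exfalso
      omega

end NEGreedy

namespace NETrans
open NEAux

variable {n : ℕ} {r : Fin 2 → ℝ} (π : Fin n → ℕ) (σ : Equiv.Perm (Fin n))

lemma ctime_comp (s : Fin n → Fin 2) (j : Fin n) :
    Ctime (fun _ => (1:ℝ)) r (fun _ => π ∘ σ) s j =
      Ctime (fun _ => (1:ℝ)) r (fun _ => π) (s ∘ σ.symm) (σ j) := by
  unfold Ctime
  rw [Finset.sum_const, Finset.sum_const, nsmul_eq_mul, nsmul_eq_mul, mul_one, mul_one]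
  have hden : (s ∘ σ.symm) (σ j) = s j := by simp
  rw [hden]
  congr 2
  apply Finset.card_equiv σ
  intro k
  simp only [mem_filter, mem_univ, true_and, Function.comp_apply, Equiv.symm_apply_apply]

lemma rank_comp (s : Fin n → Fin 2) (j : Fin n) :
    rankOf (fun _ => (1:ℝ)) r (fun _ => π ∘ σ) s j =
      rankOf (fun _ => (1:ℝ)) r (fun _ => π) (s ∘ σ.symm) (σ j) := by
  unfold rankOf
  have h1 : (univ.filter (fun k => Ctime (fun _ => (1:ℝ)) r (fun _ => π ∘ σ) s k <
      Ctime (fun _ => (1:ℝ)) r (fun _ => π ∘ σ) s j)).card =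
      (univ.filter (fun k => Ctime (fun _ => (1:ℝ)) r (fun _ => π) (s ∘ σ.symm) k <
      Ctime (fun _ => (1:ℝ)) r (fun _ => π) (s ∘ σ.symm) (σ j))).card := by
    apply Finset.card_equiv σ
    intro k
    simp only [mem_filter, mem_univ, true_and]
    rw [ctime_comp π σ s k, ctime_comp π σ s j]
  have h2 : (univ.filter (fun k => Ctime (fun _ => (1:ℝ)) r (fun _ => π ∘ σ) s k =
      Ctime (fun _ => (1:ℝ)) r (fun _ => π ∘ σ) s j)).card =
      (univ.filter (fun k => Ctime (fun _ => (1:ℝ)) r (fun _ => π) (s ∘ σ.symm) k =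
      Ctime (fun _ => (1:ℝ)) r (fun _ => π) (s ∘ σ.symm) (σ j))).card := by
    apply Finset.card_equiv σ
    intro k
    simp only [mem_filter, mem_univ, true_and]
    rw [ctime_comp π σ s k, ctime_comp π σ s j]
  rw [h1, h2]

lemma update_comp (s : Fin n → Fin 2) (j : Fin n) (i : Fin 2) :
    (Function.update s j i) ∘ σ.symm = Function.update (s ∘ σ.symm) (σ j) i := by
  funext k
  simp only [Function.comp_apply]
  rcases eq_or_ne (σ.symm k) j with h | h
  · rw [h, Function.update_self]
    have hk : k = σ j := by rw [← h, Equiv.apply_symm_apply]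
    rw [hk, Function.update_self]
  · have hk : k ≠ σ j := by
      intro hc
      exact h (by rw [hc, Equiv.symm_apply_apply])
    rw [Function.update_of_ne h, Function.update_of_ne hk, Function.comp_apply]

lemma beneficial_comp (s : Fin n → Fin 2) (j : Fin n) (i : Fin 2) :
    Beneficial (fun _ => (1:ℝ)) r (fun _ => π ∘ σ) s j i ↔
      Beneficial (fun _ => (1:ℝ)) r (fun _ => π) (s ∘ σ.symm) (σ j) i := by
  unfold Beneficial
  rw [show (fun a b => Classical.propDecidable (a = b) : DecidableEq (Fin n)) =
    instDecidableEqFin n from Subsingleton.elim _ _]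
  rw [rank_comp π σ (Function.update s j i) j, rank_comp π σ s j,
    ctime_comp π σ (Function.update s j i) j, ctime_comp π σ s j,
    update_comp σ s j i]

lemma isNE_comp (s : Fin n → Fin 2) :
    IsNE (fun _ => (1:ℝ)) r (fun _ => π ∘ σ) s ↔
      IsNE (fun _ => (1:ℝ)) r (fun _ => π) (s ∘ σ.symm) := by
  constructor
  · intro h j i
    have hh := h (σ.symm j) i
    rw [beneficial_comp π σ] at hh
    rwa [Equiv.apply_symm_apply] at hh
  · intro h j i
    rw [beneficial_comp π σ]
    exact h (σ j) i

lemma exists_comp :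
    (∃ s : Fin n → Fin 2, IsNE (fun _ => (1:ℝ)) r (fun _ => π ∘ σ) s) ↔
      (∃ s : Fin n → Fin 2, IsNE (fun _ => (1:ℝ)) r (fun _ => π) s) := by
  constructor
  · rintro ⟨s, hs⟩
    exact ⟨s ∘ σ.symm, (isNE_comp π σ s).mp hs⟩
  · rintro ⟨s, hs⟩
    refine ⟨s ∘ σ, ?_⟩
    rw [isNE_comp π σ]
    have he : (s ∘ σ) ∘ σ.symm = s := by
      funext k
      simp
    rwa [he]

end NETrans

/-- Two related machines with rational speed ratio `a/b`, a global priority list and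
`n = ℓ(a+b) + c` unit jobs: a NE exists iff `c ≠ 0`. -/
theorem rational_global_NE_iff (a b : ℕ) (ha : 0 < a) (hab : a ≤ b)
    (hco : Nat.Coprime a b) (n ℓ c : ℕ) (hn1 : 1 ≤ n) (hn : n = ℓ * (a + b) + c)
    (hclt : c < a + b)
    (π : Fin n → ℕ) (hπ : Function.Injective π) :
    (∃ s : Fin n → Fin 2,
      IsNE (fun _ => (1:ℝ)) ![1, (a : ℝ) / (b : ℝ)] (fun _ => π) s) ↔ c ≠ 0 := by
  have hb : 0 < b := lt_of_lt_of_le ha hab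
  set σ := Tuple.sort π with hσ
  have hmono : StrictMono (π ∘ σ) :=
    (Tuple.monotone_sort π).strictMono_of_injective (hπ.comp σ.injective)
  rw [← NETrans.exists_comp π σ]
  constructor
  · rintro ⟨s, hs⟩
    intro hc
    rw [hc, add_zero] at hn
    have hl : 1 ≤ ℓ := by
      by_contra hl0
      push_neg at hl0
      have hl0' : ℓ = 0 := by omega
      rw [hl0', zero_mul] at hn
      omega
    exact NEComb.no_NE a b ha hb ℓ hl hn s
      ((NEAux6.isNE_iff a b ha hb (π ∘ σ) hmono s).mp hs)
  · intro hc
    exact ⟨NEGreedy.gs a b n,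
      (NEAux6.isNE_iff a b ha hb (π ∘ σ) hmono _).mpr
        (NEGreedy.exists_NE a b ℓ c n ha hab hco hn hclt hc)⟩
end
end

section
/- In any scheduling game with rank-based utilities on m identical machines with arbitrary positive processing times and arbitrary machine-dependent priority lists, every pure Nash equilibrium s satisfies C_max(s) ≤ (2 − 1/m)·OPT(G). -/
/-!
Let `j` be a job finishing last in a Nash equilibrium `s`; it is the last job on its machine, so
its completion time `C` is that machine's load. If `j` moved to another machine `i`, no other job
would finish earlier, so its rank could only drop; hence stability forces `C ≤ load i + p j` for
every `i`. Summing over the `m` machines gives `m C ≤ ∑ p + (m - 1) p j`, while in any profile `t`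
the total work is at most `m · C_max(t)` and `p j ≤ C_max(t)`, so `C ≤ (2 - 1/m) C_max(t)`.
-/

open Finset
open scoped Classical

noncomputable section

variable {J M : Type*} [Fintype J]

/-- Makespan of profile `s`. -/
def Cmax (p : J → ℝ) (r : M → ℝ) (π : M → J → ℕ) (s : J → M) : ℝ :=
  ⨆ j, Ctime p r π s j

def fractionalRank (f : J → ℝ) (j : J) : ℝ :=
  ((univ.filter (fun k => f k < f j)).card : ℝ) +
    (((univ.filter (fun k => f k = f j)).card : ℝ) + 1) / 2

theorem rankOf_eq_fractionalRank (p : J → ℝ) (r : M → ℝ) (π : M → J → ℕ) (s : J → M) (j : J) :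
    rankOf p r π s j = fractionalRank (Ctime p r π s) j :=
  rfl

theorem card_filter_le_eq_card_filter_lt_add (f : J → ℝ) (x : ℝ) :
    (univ.filter (fun k => f k ≤ x)).card =
      (univ.filter (fun k => f k < x)).card + (univ.filter (fun k => f k = x)).card := by
  rw [← card_union_of_disjoint (disjoint_filter.2 fun _ _ h₁ h₂ => h₁.ne h₂), ← filter_or]
  simp only [le_iff_lt_or_eq]

theorem fractionalRank_le_of_lt_of_forall_le {f f' : J → ℝ} {j : J} (hj : f' j < f j)
    (hle : ∀ k, k ≠ j → f k ≤ f' k) : fractionalRank f' j ≤ fractionalRank f j := by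
  have hsub : univ.filter (fun k => f' k ≤ f' j) ⊆ insert j (univ.filter (fun k => f k < f j)) := by
    intro k hk
    rw [mem_filter] at hk
    rw [mem_insert, mem_filter]
    by_cases hkj : k = j
    · exact Or.inl hkj
    · exact Or.inr ⟨mem_univ k, by linarith [hle k hkj, hk.2]⟩
  have hcard := (card_le_card hsub).trans (card_insert_le _ _)
  rw [card_filter_le_eq_card_filter_lt_add] at hcard
  have hself : ∀ g : J → ℝ, 1 ≤ ((univ.filter (fun k => g k = g j)).card : ℝ) := fun g => by
    exact_mod_cast card_pos.2 ⟨j, by simp⟩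
  unfold fractionalRank
  have : ((univ.filter (fun k => f' k < f' j)).card : ℝ) + (univ.filter (fun k => f' k = f' j)).card
      ≤ (univ.filter (fun k => f k < f j)).card + 1 := by exact_mod_cast hcard
  linarith [hself f, hself f']

def IsLast (π : M → J → ℕ) (s : J → M) (j : J) : Prop :=
  ∀ k, s k = s j → π (s j) k ≤ π (s j) j

section Speeds

variable {p : J → ℝ} {r : M → ℝ} {π : M → J → ℕ} {s : J → M}

theorem Ctime_lt_Ctime_of_lt (hp : ∀ j, 0 < p j) {j k : J} (hr : 0 < r (s j)) (hk : s k = s j)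
    (hlt : π (s j) j < π (s j) k) : Ctime p r π s j < Ctime p r π s k := by
  unfold Ctime
  rw [hk]
  refine div_lt_div_of_pos_right (sum_lt_sum_of_subset ?_ (i := k) ?_ ?_ (hp k)
    fun x _ _ => (hp x).le) hr
  · intro x hx
    simp only [mem_filter, mem_univ, true_and] at hx ⊢
    exact ⟨hx.1, hx.2.trans hlt.le⟩
  · simp [hk]
  · simp [hlt]

theorem isLast_of_forall_Ctime_le (hp : ∀ j, 0 < p j) {j : J} (hr : 0 < r (s j))
    (hmax : ∀ k, Ctime p r π s k ≤ Ctime p r π s j) : IsLast π s j := fun k hk =>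
  not_lt.1 fun hlt => (Ctime_lt_Ctime_of_lt hp hr hk hlt).not_ge (hmax k)

theorem Ctime_le_Ctime_update_of_isLast (hp : ∀ j, 0 ≤ p j) (hr : ∀ i, 0 ≤ r i) {j k : J}
    (hπ : Function.Injective (π (s j))) (hlast : IsLast π s j) (hkj : k ≠ j) (i : M) :
    Ctime p r π s k ≤ Ctime p r π (Function.update s j i) k := by
  unfold Ctime
  rw [Function.update_of_ne hkj]
  refine div_le_div_of_nonneg_right (sum_le_sum_of_subset_of_nonneg ?_ fun x _ _ => hp x) (hr _)
  intro x hx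
  simp only [mem_filter, mem_univ, true_and] at hx ⊢
  have hxj : x ≠ j := by
    rintro rfl
    obtain ⟨hxk, hle⟩ := hx
    rw [← hxk] at hle
    exact hkj (hπ (le_antisymm (hlast k hxk.symm) hle))
  rwa [Function.update_of_ne hxj]

theorem IsNE.Ctime_le_Ctime_update (hNE : IsNE p r π s) (hp : ∀ j, 0 ≤ p j) (hr : ∀ i, 0 ≤ r i)
    {j : J} (hπ : Function.Injective (π (s j))) (hlast : IsLast π s j) (i : M) :
    Ctime p r π s j ≤ Ctime p r π (Function.update s j i) j := by
  by_contra! hlt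
  have hrank : rankOf p r π (Function.update s j i) j ≤ rankOf p r π s j := by
    rw [rankOf_eq_fractionalRank, rankOf_eq_fractionalRank]
    exact fractionalRank_le_of_lt_of_forall_le hlt fun k hkj =>
      Ctime_le_Ctime_update_of_isLast hp hr hπ hlast hkj i
  exact hNE j i (hrank.lt_or_eq.imp_right fun heq => ⟨heq, hlt⟩)

end Speeds

theorem Ctime_le_Cmax (p : J → ℝ) (r : M → ℝ) (π : M → J → ℕ) (s : J → M) (j : J) :
    Ctime p r π s j ≤ Cmax p r π s :=
  le_ciSup (Set.finite_range _).bddAbove j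

def load (p : J → ℝ) (s : J → M) (i : M) : ℝ :=
  ∑ j ∈ univ.filter (fun j => s j = i), p j

section UnitSpeeds

variable {p : J → ℝ} {π : M → J → ℕ} {s : J → M}

theorem sum_load [Fintype M] (p : J → ℝ) (s : J → M) : ∑ i, load p s i = ∑ j, p j :=
  sum_fiberwise univ s p

theorem Ctime_one_le_load (hp : ∀ j, 0 ≤ p j) (j : J) :
    Ctime p (fun _ => (1 : ℝ)) π s j ≤ load p s (s j) := by
  rw [Ctime, div_one]
  refine sum_le_sum_of_subset_of_nonneg (fun k hk => ?_) fun k _ _ => hp k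
  rw [mem_filter] at hk ⊢
  exact ⟨hk.1, hk.2.1⟩

theorem Ctime_one_eq_load_of_isLast {j : J} (hlast : IsLast π s j) :
    Ctime p (fun _ => (1 : ℝ)) π s j = load p s (s j) := by
  rw [Ctime, div_one, load]
  exact sum_congr (filter_congr fun k _ => and_iff_left_of_imp (hlast k)) fun _ _ => rfl

theorem p_le_Ctime_one (hp : ∀ j, 0 ≤ p j) (j : J) : p j ≤ Ctime p (fun _ => (1 : ℝ)) π s j := by
  rw [Ctime, div_one]
  exact single_le_sum (fun k _ => hp k) (by simp)

theorem load_update_le (hp : ∀ j, 0 ≤ p j) (j : J) (i : M) :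
    load p (Function.update s j i) i ≤ load p s i + p j := by
  unfold load
  rw [← add_sum_erase _ _ (by simp : j ∈ univ.filter (fun k => Function.update s j i k = i)),
    add_comm]
  refine add_le_add_left (sum_le_sum_of_subset_of_nonneg (fun k hk => ?_) fun k _ _ => hp k) _
  obtain ⟨hkj, hk⟩ := mem_erase.1 hk
  rw [mem_filter, Function.update_of_ne hkj] at hk
  exact mem_filter.2 hk

theorem load_le_Cmax (hp : ∀ j, 0 ≤ p j) (i : M) :
    load p s i ≤ Cmax p (fun _ => (1 : ℝ)) π s := by
  by_cases hi : (univ.filter (fun j => s j = i)).Nonempty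
  · obtain ⟨k, hk, hkmax⟩ := exists_max_image _ (π i) hi
    obtain rfl : s k = i := (mem_filter.1 hk).2
    have hlast : IsLast π s k := fun j hj => hkmax j (by simp [hj])
    exact (Ctime_one_eq_load_of_isLast hlast).symm.trans_le (Ctime_le_Cmax _ _ _ _ k)
  · rw [load, not_nonempty_iff_eq_empty.1 hi, sum_empty]
    exact Real.iSup_nonneg fun j => (hp j).trans (p_le_Ctime_one hp j)

theorem sum_le_card_mul_Cmax [Fintype M] (hp : ∀ j, 0 ≤ p j) (t : J → M) :
    ∑ j, p j ≤ Fintype.card M * Cmax p (fun _ => (1 : ℝ)) π t := by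
  rw [← sum_load p t]
  calc ∑ i, load p t i ≤ ∑ _i : M, Cmax p (fun _ => (1 : ℝ)) π t :=
        sum_le_sum fun i _ => load_le_Cmax hp i
    _ = Fintype.card M * Cmax p (fun _ => (1 : ℝ)) π t := by simp

theorem IsNE.card_mul_Ctime_le [Fintype M] (hNE : IsNE p (fun _ => (1 : ℝ)) π s)
    (hp : ∀ j, 0 ≤ p j) {j : J} (hπ : Function.Injective (π (s j))) (hlast : IsLast π s j) :
    Fintype.card M * Ctime p (fun _ => (1 : ℝ)) π s j
      ≤ ∑ k, p k + (Fintype.card M - 1) * p j := by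
  set C := Ctime p (fun _ => (1 : ℝ)) π s j
  have hstable : ∀ i, C - p j ≤ load p s i := fun i => by
    have := (hNE.Ctime_le_Ctime_update hp (fun _ => zero_le_one) hπ hlast i).trans
      ((Ctime_one_le_load hp j).trans (by simpa using load_update_le hp j i))
    linarith
  have hothers := card_nsmul_le_sum _ _ _ fun i (_ : i ∈ univ.erase (s j)) => hstable i
  have hcard : ((univ.erase (s j)).card : ℝ) = Fintype.card M - 1 := by
    rw [← card_univ, ← card_erase_add_one (mem_univ (s j))]
    push_cast
    ring
  rw [nsmul_eq_mul, hcard] at hothers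
  rw [← sum_load p s, ← add_sum_erase _ _ (mem_univ (s j)), ← Ctime_one_eq_load_of_isLast hlast]
  linarith

end UnitSpeeds

theorem PoA_identical_general {J : Type*} [Fintype J] [Nonempty J] (m : ℕ)
    (p : J → ℝ) (hp : ∀ j, 0 < p j)
    (π : Fin m → J → ℕ) (hπ : ∀ i, Function.Injective (π i))
    (s : J → Fin m) (hNE : IsNE p (fun _ => (1:ℝ)) π s) (t : J → Fin m) :
    Cmax p (fun _ => (1:ℝ)) π s ≤ (2 - 1 / (m : ℝ)) * Cmax p (fun _ => (1:ℝ)) π t := by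
  have hp' : ∀ j, 0 ≤ p j := fun j => (hp j).le
  obtain ⟨j, -, hjmax⟩ := exists_max_image univ (Ctime p (fun _ => (1 : ℝ)) π s) univ_nonempty
  have hCmax : Cmax p (fun _ => (1 : ℝ)) π s = Ctime p (fun _ => (1 : ℝ)) π s j :=
    le_antisymm (ciSup_le fun k => hjmax k (mem_univ k)) (Ctime_le_Cmax _ _ _ _ j)
  have hlast := isLast_of_forall_Ctime_le hp zero_lt_one fun k => hjmax k (mem_univ k)
  have hbalance := hNE.card_mul_Ctime_le hp' (hπ (s j)) hlast
  have hwork := sum_le_card_mul_Cmax (π := π) hp' t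
  have hpj : p j ≤ Cmax p (fun _ => (1 : ℝ)) π t :=
    (p_le_Ctime_one hp' j).trans (Ctime_le_Cmax _ _ _ t j)
  rw [Fintype.card_fin] at hbalance hwork
  have hm : (1 : ℝ) ≤ m := by exact_mod_cast Fin.pos (s j)
  rw [hCmax, show (2 - 1 / (m : ℝ)) * Cmax p (fun _ => (1 : ℝ)) π t
      = (2 * m - 1) * Cmax p (fun _ => (1 : ℝ)) π t / m by field_simp, le_div_iff₀ (by linarith)]
  nlinarith [mul_le_mul_of_nonneg_left hpj (sub_nonneg.2 hm)]

/-- PoA upper bound on identical machines: every NE has makespan at most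
`(2 - 1/m)` times the optimal makespan. -/
theorem PoA_identical {J : Type*} [Fintype J] [Nonempty J] (m : ℕ) (hm : 1 ≤ m)
    (p : J → ℝ) (hp : ∀ j, 0 < p j)
    (π : Fin m → J → ℕ) (hπ : ∀ i, Function.Injective (π i))
    (s : J → Fin m) (hNE : IsNE p (fun _ => (1:ℝ)) π s) (t : J → Fin m) :
    Cmax p (fun _ => (1:ℝ)) π s ≤ (2 - 1 / (m : ℝ)) * Cmax p (fun _ => (1:ℝ)) π t :=
  PoA_identical_general m p hp π hπ s hNE t
end
end

section
/- In any scheduling game with rank-based utilities on two machines with speeds r₁ = 1 and r₂ = r, where 0 < r ≤ (√5 − 1)/2, with arbitrary positive processing times and arbitrary priority lists, every pure Nash equilibrium s satisfies C_max(s) ≤ (r + 1)·OPT(G). -/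
open Finset
open scoped Classical

noncomputable section

variable {J M : Type*} [Fintype J]

section Aux
variable {J : Type*} [Fintype J]

lemma ctime_nonneg (p : J → ℝ) {R : Fin 2 → ℝ} (hR : ∀ i, 0 < R i)
    (π : Fin 2 → J → ℕ) (u : J → Fin 2) (hp : ∀ j, 0 ≤ p j) (j : J) :
    0 ≤ Ctime p R π u j :=
  div_nonneg (Finset.sum_nonneg fun _ _ => hp _) (hR _).le

lemma ctime_le_load (p : J → ℝ) {R : Fin 2 → ℝ} (hR : ∀ i, 0 < R i)
    (π : Fin 2 → J → ℕ) (u : J → Fin 2) (hp : ∀ j, 0 ≤ p j) (j : J) :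
    Ctime p R π u j ≤ (∑ j' ∈ univ.filter (fun j' => u j' = u j), p j') / R (u j) := by
  unfold Ctime
  gcongr (∑ x ∈ ?_, p x) / _
  · exact (hR _).le
  · intro i hi hni; exact hp i
  · intro i hi
    simp only [mem_filter, mem_univ, true_and] at hi ⊢
    exact hi.1

lemma ctime_argmax (p : J → ℝ) (R : Fin 2 → ℝ) (π : Fin 2 → J → ℕ)
    (u : J → Fin 2) (i : Fin 2)
    (hne : (univ.filter (fun j => u j = i)).Nonempty) :
    ∃ j, u j = i ∧ (∀ j', u j' = i → π i j' ≤ π i j) ∧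
      Ctime p R π u j = (∑ j' ∈ univ.filter (fun j' => u j' = i), p j') / R i := by
  obtain ⟨j, hj, hmax⟩ := Finset.exists_max_image _ (π i) hne
  simp only [mem_filter, mem_univ, true_and] at hj
  have hmax' : ∀ j', u j' = i → π i j' ≤ π i j := fun j' h => hmax j' (by simp [h])
  refine ⟨j, hj, hmax', ?_⟩
  unfold Ctime
  rw [hj]
  congr 1
  apply Finset.sum_congr _ (fun _ _ => rfl)
  ext j'
  simp only [mem_filter, mem_univ, true_and]
  exact ⟨fun h => h.1, fun h => ⟨h, hmax' j' h⟩⟩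

end Aux

section Rank
variable {J : Type*} [Fintype J]

lemma rank_mono (p : J → ℝ) (R : Fin 2 → ℝ) (π : Fin 2 → J → ℕ)
    (s s' : J → Fin 2) (jm : J)
    (hmono : ∀ j', j' ≠ jm → Ctime p R π s j' ≤ Ctime p R π s' j')
    (hlt : Ctime p R π s' jm < Ctime p R π s jm) :
    rankOf p R π s' jm ≤ rankOf p R π s jm := by
  set A : Finset J := univ.filter (fun j' => Ctime p R π s j' < Ctime p R π s jm) with hA
  set E : Finset J := univ.filter (fun j' => Ctime p R π s j' = Ctime p R π s jm) with hE
  set A' : Finset J := univ.filter (fun j' => Ctime p R π s' j' < Ctime p R π s' jm) with hA'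
  set E' : Finset J := univ.filter (fun j' => Ctime p R π s' j' = Ctime p R π s' jm) with hE'
  have hjmE : jm ∈ E := by simp [hE]
  have hjmE' : jm ∈ E' := by simp [hE']
  have hsub : A' ∪ E'.erase jm ⊆ A := by
    intro j' hj'
    simp only [mem_union, mem_erase, hA', hE', mem_filter, mem_univ, true_and] at hj'
    have hne : j' ≠ jm := by
      rcases hj' with h | h
      · rintro rfl; exact lt_irrefl _ h
      · exact h.1
    have h1 : Ctime p R π s' j' < Ctime p R π s jm := by
      rcases hj' with h | h
      · exact h.trans hlt
      · rw [h.2]; exact hlt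
    simp only [hA, mem_filter, mem_univ, true_and]
    exact lt_of_le_of_lt (hmono j' hne) h1
  have hdisj : Disjoint A' (E'.erase jm) := by
    rw [Finset.disjoint_left]
    intro j' h1 h2
    simp only [hA', mem_filter, mem_univ, true_and] at h1
    simp only [mem_erase, hE', mem_filter, mem_univ, true_and] at h2
    rw [h2.2] at h1
    exact lt_irrefl _ h1
  have hcard : A'.card + (E'.erase jm).card ≤ A.card := by
    rw [← Finset.card_union_of_disjoint hdisj]
    exact Finset.card_le_card hsub
  have hE'card : E'.card = (E'.erase jm).card + 1 := by
    have := Finset.card_pos.mpr ⟨jm, hjmE'⟩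
    rw [Finset.card_erase_of_mem hjmE']
    omega
  have hEpos : 1 ≤ E.card := Finset.card_pos.mpr ⟨jm, hjmE⟩
  unfold rankOf
  rw [← hA, ← hE, ← hA', ← hE']
  have c1 : (A'.card : ℝ) + (E'.erase jm).card ≤ A.card := by exact_mod_cast hcard
  have c2 : (E'.card : ℝ) = (E'.erase jm).card + 1 := by exact_mod_cast hE'card
  have c3 : (1 : ℝ) ≤ E.card := by exact_mod_cast hEpos
  linarith

end Rank

section Dev
variable {J : Type*} [Fintype J]

lemma fin2cases (i : Fin 2) : i = 0 ∨ i = 1 := by omega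

lemma ne_deviation (p : J → ℝ) (R : Fin 2 → ℝ) (π : Fin 2 → J → ℕ)
    (hR : ∀ i, 0 < R i)
    (hπ : ∀ i, Function.Injective (π i)) (hp : ∀ j, 0 ≤ p j)
    (s : J → Fin 2) (hNE : IsNE p R π s) (jm : J) (hjm : s jm = 1)
    (hmax : ∀ j', s j' = 1 → π 1 j' ≤ π 1 jm) :
    Ctime p R π s jm ≤ Ctime p R π (Function.update s jm 0) jm := by
  by_contra hcon
  push_neg at hcon
  set s' : J → Fin 2 := Function.update s jm 0 with hs'
  have hmono : ∀ j', j' ≠ jm → Ctime p R π s j' ≤ Ctime p R π s' j' := by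
    intro j' hne
    have hupd : s' j' = s j' := Function.update_of_ne hne _ _
    rcases fin2cases (s j') with h0 | h1
    · -- machine 0 : load only grows
      unfold Ctime
      rw [hupd]
      gcongr (∑ x ∈ ?_, p x) / _
      · exact (hR _).le
      · intro i hi hni; exact hp i
      · intro j'' hj''
        simp only [mem_filter, mem_univ, true_and] at hj'' ⊢
        have hne'' : j'' ≠ jm := by
          intro hh; rw [hh, hjm] at hj''; rw [h0] at hj''; exact absurd hj''.1 (by decide)
        rw [hs', Function.update_of_ne hne'']
        exact hj''
    · -- machine 1 : unchanged
      have : Ctime p R π s' j' = Ctime p R π s j' := by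
        unfold Ctime
        rw [hupd]
        congr 2
        ext j''
        simp only [mem_filter, mem_univ, true_and]
        constructor
        · rintro ⟨ha, hb⟩
          have hne'' : j'' ≠ jm := by
            intro hh; rw [hh] at ha; rw [hs', Function.update_self] at ha
            exact absurd (ha.trans h1) (by decide)
          rw [hs', Function.update_of_ne hne''] at ha
          exact ⟨ha, hb⟩
        · rintro ⟨ha, hb⟩
          have hne'' : j'' ≠ jm := by
            intro hh
            apply hne
            apply hπ 1
            rw [h1] at hb
            rw [hh] at hb
            exact le_antisymm (hmax j' h1) hb
          rw [hs', Function.update_of_ne hne'']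
          exact ⟨ha, hb⟩
      exact this.ge
  have hrank := rank_mono p R π s s' jm hmono hcon
  apply hNE jm 0
  unfold Beneficial
  rw [← hs']
  rcases hrank.lt_or_eq with h | h
  · exact Or.inl h
  · exact Or.inr ⟨h, hcon⟩

end Dev

/-- PoA upper bound on two related machines with `r ≤ (√5 - 1)/2`. -/
theorem PoA_related_small {J : Type*} [Fintype J] [Nonempty J]
    (r : ℝ) (hr0 : 0 < r) (hr1 : r ≤ (Real.sqrt 5 - 1) / 2)
    (p : J → ℝ) (hp : ∀ j, 0 < p j)
    (π : Fin 2 → J → ℕ) (hπ : ∀ i, Function.Injective (π i))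
    (s : J → Fin 2) (hNE : IsNE p ![1, r] π s) (t : J → Fin 2) :
    Cmax p ![1, r] π s ≤ (r + 1) * Cmax p ![1, r] π t := by
  set R : Fin 2 → ℝ := ![1, r] with hRdef
  have hR0 : R 0 = 1 := rfl
  have hR1 : R 1 = r := rfl
  have hR : ∀ i : Fin 2, 0 < R i := by
    intro i
    rcases fin2cases i with h | h <;> rw [h]
    · rw [hR0]; norm_num
    · rw [hR1]; exact hr0
  have hppos : ∀ j, 0 ≤ p j := fun j => (hp j).le
  set Ct := Cmax p R π t with hCtdef
  have hb : ∀ u : J → Fin 2, BddAbove (Set.range fun j => Ctime p R π u j) :=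
    fun u => (Set.finite_range _).bddAbove
  have hCt : ∀ j, Ctime p R π t j ≤ Ct := fun j => le_ciSup (hb t) j
  have hCt0 : 0 ≤ Ct :=
    le_trans (ctime_nonneg p hR π t hppos (Classical.arbitrary J)) (hCt _)
  -- total work is at most (r+1) * Ct
  have hloadt : ∀ i : Fin 2, (∑ j' ∈ univ.filter (fun j' => t j' = i), p j') ≤ R i * Ct := by
    intro i
    rcases (univ.filter (fun j' => t j' = i)).eq_empty_or_nonempty with he | hne
    · rw [he, Finset.sum_empty]
      exact mul_nonneg (hR i).le hCt0
    · obtain ⟨jx, _, _, hcx⟩ := ctime_argmax p R π t i hne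
      have := hCt jx
      rw [hcx, div_le_iff₀ (hR i)] at this
      linarith [this]
  have htotal : (∑ j, p j) ≤ (r + 1) * Ct := by
    have hsplit : (∑ j' ∈ univ.filter (fun j' => t j' = 0), p j')
        + (∑ j' ∈ univ.filter (fun j' => t j' = 1), p j') = ∑ j, p j := by
      rw [← Finset.sum_filter_add_sum_filter_not univ (fun j => t j = 0) p]
      congr 1
      apply Finset.sum_congr _ (fun _ _ => rfl)
      apply Finset.filter_congr
      intro j _
      constructor
      · intro h; omega
      · intro h; omega
    have h0 := hloadt 0
    have h1 := hloadt 1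
    rw [hR0] at h0; rw [hR1] at h1
    linarith
  -- makespan of s is at most total work
  have hCs : Cmax p R π s ≤ ∑ j, p j := by
    apply ciSup_le
    intro j
    have hle := ctime_le_load p hR π s hppos j
    have hsub : ∀ i : Fin 2, (∑ j' ∈ univ.filter (fun j' => s j' = i), p j') ≤ ∑ j, p j :=
      fun i => Finset.sum_le_sum_of_subset_of_nonneg (Finset.filter_subset _ _)
        (fun j' _ _ => hppos j')
    rcases fin2cases (s j) with h | h
    · rw [h, hR0, div_one] at hle
      exact le_trans hle (hsub 0)
    · -- machine 1
      have hne1 : (univ.filter (fun j' => s j' = 1)).Nonempty := ⟨j, by simp [h]⟩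
      obtain ⟨jm, hjm, hmaxm, hcm⟩ := ctime_argmax p R π s 1 hne1
      have hdev := ne_deviation p R π hR hπ hppos s hNE jm hjm hmaxm
      -- bound the deviated completion time
      set s' : J → Fin 2 := Function.update s jm 0 with hs'
      have hdevle : Ctime p R π s' jm ≤
          (∑ j' ∈ univ.filter (fun j' => s j' = 0), p j') + p jm := by
        unfold Ctime
        have hup : s' jm = 0 := Function.update_self _ _ _
        rw [hup, hR0, div_one]
        refine le_trans (Finset.sum_le_sum_of_subset_of_nonneg (t := insert jm (univ.filter (fun j' => s j' = 0)))
            ?_ ?_) ?_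
        · intro j'' hj''
          simp only [mem_filter, mem_univ, true_and] at hj''
          by_cases hc : j'' = jm
          · rw [hc]; exact Finset.mem_insert_self _ _
          · rw [hs', Function.update_of_ne hc] at hj''
            exact Finset.mem_insert_of_mem (by simp [hj''.1])
        · intro j' _ _; exact hppos j'
        · rw [Finset.sum_insert (by simp [hjm])]
          exact le_of_eq (by ring)
      have hpjm : p jm ≤ ∑ j' ∈ univ.filter (fun j' => s j' = 1), p j' :=
        Finset.single_le_sum (fun j' _ => hppos j') (by simp [hjm])
      -- chain : Ctime s j ≤ load1 / r = Ctime s jm ≤ Ctime s' jm ≤ load0 + p jm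
      rw [h, hR1] at hle
      have hchain : Ctime p R π s j ≤
          (∑ j' ∈ univ.filter (fun j' => s j' = 0), p j') + p jm := by
        calc Ctime p R π s j ≤ (∑ j' ∈ univ.filter (fun j' => s j' = 1), p j') / r := hle
          _ = Ctime p R π s jm := by rw [hcm, hR1]
          _ ≤ Ctime p R π s' jm := hdev
          _ ≤ _ := hdevle
      have hsplit : (∑ j' ∈ univ.filter (fun j' => s j' = 0), p j')
          + (∑ j' ∈ univ.filter (fun j' => s j' = 1), p j') = ∑ j, p j := by
        rw [← Finset.sum_filter_add_sum_filter_not univ (fun j => s j = 0) p]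
        congr 1
        apply Finset.sum_congr _ (fun _ _ => rfl)
        apply Finset.filter_congr
        intro j _
        constructor
        · intro hh; omega
        · intro hh; omega
      linarith
  calc Cmax p R π s ≤ ∑ j, p j := hCs
    _ ≤ (r + 1) * Ct := htotal
end
end

section
/- In any scheduling game with rank-based utilities on two machines with speeds r₁ = 1 and r₂ = r, where (√5 − 1)/2 < r ≤ 1, with arbitrary positive processing times and arbitrary priority lists, every pure Nash equilibrium s satisfies C_max(s) ≤ ((r + 2)/(r + 1))·OPT(G). -/
open Finset
open scoped Classical

noncomputable section

variable {J M : Type*} [Fintype J]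

section Aux

variable {p : J → ℝ} {r : M → ℝ} {π : M → J → ℕ}

lemma Ctime_nonneg (hp : ∀ j, 0 < p j) (hr : ∀ i, 0 < r i) (s : J → M) (j : J) :
    0 ≤ Ctime p r π s j :=
  div_nonneg (Finset.sum_nonneg fun i _ => (hp i).le) (hr _).le

/-- Jobs later in the priority list on the same machine finish strictly later. -/
lemma Ctime_lt_of_lt (hp : ∀ j, 0 < p j) (hr : ∀ i, 0 < r i) (s : J → M) {a b : J}
    (hs : s a = s b) (hab : π (s b) a < π (s b) b) :
    Ctime p r π s a < Ctime p r π s b := by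
  unfold Ctime
  rw [hs]
  have hbmem : b ∉ univ.filter (fun j' => s j' = s b ∧ π (s b) j' ≤ π (s b) a) := by
    simp only [mem_filter, mem_univ, true_and, not_and]
    exact fun _ => by omega
  have hsub : insert b (univ.filter (fun j' => s j' = s b ∧ π (s b) j' ≤ π (s b) a)) ⊆
      univ.filter (fun j' => s j' = s b ∧ π (s b) j' ≤ π (s b) b) := by
    intro x hx
    rcases Finset.mem_insert.1 hx with hx | hx
    · subst hx; simp
    · simp only [mem_filter, mem_univ, true_and] at hx ⊢
      exact ⟨hx.1, by omega⟩
  have hsum : p b + ∑ j' ∈ univ.filter (fun j' => s j' = s b ∧ π (s b) j' ≤ π (s b) a), p j' ≤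
      ∑ j' ∈ univ.filter (fun j' => s j' = s b ∧ π (s b) j' ≤ π (s b) b), p j' := by
    rw [← Finset.sum_insert hbmem]
    exact Finset.sum_le_sum_of_subset_of_nonneg hsub (fun k _ _ => (hp k).le)
  have hpb := hp b
  gcongr
  · exact hr _
  · linarith

/-- A job on a different machine than `j`: moving `j` cannot decrease its completion time. -/
lemma Ctime_update_other (hp : ∀ j, 0 < p j) (hr : ∀ i, 0 < r i) (s : J → M) (j : J) (i : M)
    {b : J} (hb : b ≠ j) (hsb : s b ≠ s j) :
    Ctime p r π s b ≤ Ctime p r π (Function.update s j i) b := by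
  unfold Ctime
  have hsb' : Function.update s j i b = s b := Function.update_of_ne hb _ _
  rw [hsb']
  have hsub : (univ.filter (fun j' => s j' = s b ∧ π (s b) j' ≤ π (s b) b)) ⊆
      (univ.filter (fun j' => Function.update s j i j' = s b ∧ π (s b) j' ≤ π (s b) b)) := by
    intro x hx
    simp only [mem_filter, mem_univ, true_and] at hx ⊢
    have hxj : x ≠ j := by
      rintro rfl
      exact hsb hx.1.symm
    rw [Function.update_of_ne hxj]
    exact hx
  have hsum := Finset.sum_le_sum_of_subset_of_nonneg hsub (fun k _ _ => (hp k).le)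
  exact div_le_div_of_nonneg_right hsum (hr _).le

/-- A job earlier than `j` on `j`'s machine is unaffected when `j` moves. -/
lemma Ctime_update_before {s : J → M} {j : J} {i : M}
    {b : J} (hb : b ≠ j) (hsb : s b = s j) (hπb : π (s b) b < π (s b) j) :
    Ctime p r π (Function.update s j i) b = Ctime p r π s b := by
  unfold Ctime
  have hsb' : Function.update s j i b = s b := Function.update_of_ne hb _ _
  rw [hsb']
  congr 1
  apply Finset.sum_congr _ (fun _ _ => rfl)
  ext x
  simp only [mem_filter, mem_univ, true_and]
  by_cases hxj : x = j
  · subst hxj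
    constructor
    · rintro ⟨-, h2⟩; exact absurd h2 (by omega)
    · rintro ⟨-, h2⟩; exact absurd h2 (by omega)
  · rw [Function.update_of_ne hxj]

/-- Bound on the completion time of `j` after moving to machine `i`. -/
lemma Ctime_update_self_le (hp : ∀ j, 0 < p j) (hr : ∀ i, 0 < r i) (s : J → M) (j : J) (i : M) :
    Ctime p r π (Function.update s j i) j ≤
      ((∑ j' ∈ univ.filter (fun j' => s j' = i), p j') + p j) / r i := by
  unfold Ctime
  rw [Function.update_self]
  have hsub : (univ.filter (fun j' => Function.update s j i j' = i ∧ π i j' ≤ π i j)) ⊆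
      insert j (univ.filter (fun j' => s j' = i)) := by
    intro x hx
    simp only [mem_filter, mem_univ, true_and] at hx
    by_cases hxj : x = j
    · exact Finset.mem_insert.2 (Or.inl hxj)
    · rw [Function.update_of_ne hxj] at hx
      exact Finset.mem_insert.2 (Or.inr (by simp [hx.1]))
  have h1 : ∑ j' ∈ univ.filter (fun j' => Function.update s j i j' = i ∧ π i j' ≤ π i j), p j' ≤
      ∑ j' ∈ insert j (univ.filter (fun j' => s j' = i)), p j' :=
    Finset.sum_le_sum_of_subset_of_nonneg hsub (fun k _ _ => (hp k).le)
  have h2 : ∑ j' ∈ insert j (univ.filter (fun j' => s j' = i)), p j' ≤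
      (∑ j' ∈ univ.filter (fun j' => s j' = i), p j') + p j := by
    by_cases hj : j ∈ univ.filter (fun j' => s j' = i)
    · rw [Finset.insert_eq_self.2 hj]
      have := hp j; linarith
    · rw [Finset.sum_insert hj]; linarith
  exact div_le_div_of_nonneg_right (le_trans h1 h2) (hr i).le

/-- The completion time of a job with maximal completion time is its machine's load over speed. -/
lemma Ctime_max_eq (hp : ∀ j, 0 < p j) (hr : ∀ i, 0 < r i)
    (s : J → M) (j : J) (hmax : ∀ j', Ctime p r π s j' ≤ Ctime p r π s j) :
    Ctime p r π s j = (∑ j' ∈ univ.filter (fun j' => s j' = s j), p j') / r (s j) := by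
  unfold Ctime
  congr 1
  apply Finset.sum_congr _ (fun _ _ => rfl)
  ext x
  simp only [mem_filter, mem_univ, true_and]
  constructor
  · rintro ⟨h, -⟩; exact h
  · intro h
    refine ⟨h, ?_⟩
    by_contra hcon
    have hlt : π (s x) j < π (s x) x := by rw [h]; omega
    have := Ctime_lt_of_lt hp hr s (a := j) (b := x) h.symm hlt
    exact absurd (hmax x) (not_le.2 this)

/-- Each job's processing time bounds its completion time from below (speeds at most 1). -/
lemma p_le_Ctime (hp : ∀ j, 0 < p j) (hr : ∀ i, 0 < r i) (u : J → M) (j : J)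
    (hru : r (u j) ≤ 1) : p j ≤ Ctime p r π u j := by
  unfold Ctime
  rw [le_div_iff₀ (hr _)]
  have h1 : p j ≤ ∑ j' ∈ univ.filter (fun j' => u j' = u j ∧ π (u j) j' ≤ π (u j) j), p j' := by
    apply Finset.single_le_sum (fun k _ => (hp k).le)
    simp
  nlinarith [hr (u j), hp j]

/-- Key lemma: a job with maximal completion time that can strictly decrease its completion
time by moving has a beneficial deviation. -/
lemma beneficial_of_max (hp : ∀ j, 0 < p j) (hr : ∀ i, 0 < r i)
    (hπ : ∀ i, Function.Injective (π i)) (s : J → M) (j : J) (i : M)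
    (hmax : ∀ j', Ctime p r π s j' ≤ Ctime p r π s j)
    (hC : Ctime p r π (Function.update s j i) j < Ctime p r π s j) :
    Beneficial p r π s j i := by
  classical
  set s' := Function.update s j i with hs'
  set A := univ.filter (fun j' => Ctime p r π s j' < Ctime p r π s j) with hA
  set B := univ.filter (fun j' => Ctime p r π s j' = Ctime p r π s j) with hB
  set A' := univ.filter (fun j' => Ctime p r π s' j' < Ctime p r π s' j) with hA'
  set B' := univ.filter (fun j' => Ctime p r π s' j' = Ctime p r π s' j) with hB'
  set U' := univ.filter (fun j' => Ctime p r π s' j < Ctime p r π s' j') with hU'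
  -- every job tied with j (other than j) ends strictly above j after the move
  have hBU : B.erase j ⊆ U' := by
    intro b hb
    have hbj : b ≠ j := Finset.ne_of_mem_erase hb
    have hbB : b ∈ B := Finset.mem_of_mem_erase hb
    have hCb : Ctime p r π s b = Ctime p r π s j := (Finset.mem_filter.1 hbB).2
    simp only [hU', mem_filter, mem_univ, true_and]
    by_cases hsb : s b = s j
    · rcases lt_trichotomy (π (s j) b) (π (s j) j) with h | h | h
      · have heq : Ctime p r π s' b = Ctime p r π s b :=
          Ctime_update_before hbj hsb (by rw [hsb]; exact h)
        rw [heq, hCb]; exact hC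
      · exact absurd (hπ (s j) h) hbj
      · have hlt : Ctime p r π s j < Ctime p r π s b := by
          refine Ctime_lt_of_lt hp hr s hsb.symm ?_
          rw [← hsb] at h; exact h
        exact absurd (hmax b) (not_le.2 (hCb ▸ hlt))
    · have h1 : Ctime p r π s b ≤ Ctime p r π s' b := Ctime_update_other hp hr s j i hbj hsb
      calc Ctime p r π s' j < Ctime p r π s j := hC
        _ = Ctime p r π s b := hCb.symm
        _ ≤ Ctime p r π s' b := h1
  have hjB : j ∈ B := by simp [hB]
  have hjB' : j ∈ B' := by simp [hB']
  have hcard1 : B.card ≤ U'.card + 1 := by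
    have h1 := Finset.card_le_card hBU
    have h2 := Finset.card_erase_of_mem hjB
    omega
  have hcard2 : 1 ≤ B'.card := Finset.card_pos.2 ⟨j, hjB'⟩
  have hAB : A.card + B.card = Fintype.card J := by
    have hdisj : Disjoint A B := by
      rw [Finset.disjoint_left]
      intro a haA haB
      exact absurd (Finset.mem_filter.1 haB).2 (ne_of_lt (Finset.mem_filter.1 haA).2)
    have hunion : A ∪ B = univ := by
      ext x
      simp only [Finset.mem_union, hA, hB, mem_filter, mem_univ, true_and, iff_true]
      exact (hmax x).lt_or_eq
    rw [← Finset.card_union_of_disjoint hdisj, hunion, Finset.card_univ]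
  have hABU' : A'.card + B'.card + U'.card ≤ Fintype.card J := by
    have hd1 : Disjoint A' B' := by
      rw [Finset.disjoint_left]
      intro a haA haB
      exact absurd (Finset.mem_filter.1 haB).2 (ne_of_lt (Finset.mem_filter.1 haA).2)
    have hd2 : Disjoint (A' ∪ B') U' := by
      rw [Finset.disjoint_left]
      intro a haAB haU
      have hU := (Finset.mem_filter.1 haU).2
      rcases Finset.mem_union.1 haAB with h | h
      · exact absurd (Finset.mem_filter.1 h).2 (not_lt.2 hU.le)
      · exact absurd (Finset.mem_filter.1 h).2 (ne_of_gt hU)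
    calc A'.card + B'.card + U'.card = (A' ∪ B').card + U'.card := by
          rw [Finset.card_union_of_disjoint hd1]
      _ = ((A' ∪ B') ∪ U').card := (Finset.card_union_of_disjoint hd2).symm
      _ ≤ Fintype.card J := by rw [← Finset.card_univ]; exact Finset.card_le_card (subset_univ _)
  have hnat : 2 * A'.card + B'.card ≤ 2 * A.card + B.card := by omega
  have hrank : rankOf p r π s' j ≤ rankOf p r π s j := by
    unfold rankOf
    rw [← hA, ← hB, ← hA', ← hB']
    have hc : (2 * A'.card + B'.card : ℝ) ≤ (2 * A.card + B.card : ℝ) := by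
      exact_mod_cast hnat
    linarith
  unfold Beneficial
  rw [hs'] at hrank hC
  rcases lt_or_eq_of_le hrank with h | h
  · exact Or.inl h
  · exact Or.inr ⟨h, hC⟩

end Aux

/-- PoA upper bound on two related machines with `(√5 - 1)/2 < r ≤ 1`. -/
theorem PoA_related_large {J : Type*} [Fintype J] [Nonempty J]
    (r : ℝ) (hr0 : (Real.sqrt 5 - 1) / 2 < r) (hr1 : r ≤ 1)
    (p : J → ℝ) (hp : ∀ j, 0 < p j)
    (π : Fin 2 → J → ℕ) (hπ : ∀ i, Function.Injective (π i))
    (s : J → Fin 2) (hNE : IsNE p ![1, r] π s) (t : J → Fin 2) :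
    Cmax p ![1, r] π s ≤ ((r + 2) / (r + 1)) * Cmax p ![1, r] π t := by
  classical
  set R : Fin 2 → ℝ := ![1, r] with hR
  have hrpos : 0 < r := by
    have h5 : (1 : ℝ) ≤ Real.sqrt 5 := by
      rw [show (1 : ℝ) = Real.sqrt 1 from (Real.sqrt_one).symm]
      exact Real.sqrt_le_sqrt (by norm_num)
    linarith
  have hR0 : R 0 = 1 := rfl
  have hR1 : R 1 = r := rfl
  have hfin2 : ∀ i : Fin 2, i = 0 ∨ i = 1 := by omega
  have hr : ∀ i, 0 < R i := by
    intro i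
    rcases hfin2 i with h | h <;> subst h
    · rw [hR0]; norm_num
    · rw [hR1]; exact hrpos
  have hrle : ∀ i, R i ≤ 1 := by
    intro i
    rcases hfin2 i with h | h <;> subst h
    · rw [hR0]
    · rw [hR1]; exact hr1
  -- the makespan of t bounds completion times
  set T := Cmax p R π t with hT
  have hbddt : BddAbove (Set.range (Ctime p R π t)) := Set.Finite.bddAbove (Set.finite_range _)
  have hTle : ∀ j', Ctime p R π t j' ≤ T := fun j' => le_ciSup hbddt j'
  have hT0 : 0 ≤ T := le_trans (Ctime_nonneg hp hr t (Classical.arbitrary J)) (hTle _)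
  -- machine loads under t are bounded by R i * T
  have hload : ∀ i : Fin 2, ∑ j' ∈ univ.filter (fun j' => t j' = i), p j' ≤ R i * T := by
    intro i
    by_cases hne : (univ.filter (fun j' => t j' = i)).Nonempty
    · obtain ⟨b, hb, hbmax⟩ := Finset.exists_max_image _ (π i) hne
      have htb : t b = i := (Finset.mem_filter.1 hb).2
      have hCb : Ctime p R π t b = (∑ j' ∈ univ.filter (fun j' => t j' = i), p j') / R i := by
        unfold Ctime
        rw [htb]
        congr 1
        apply Finset.sum_congr _ (fun _ _ => rfl)
        ext x
        simp only [mem_filter, mem_univ, true_and]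
        constructor
        · rintro ⟨h, -⟩; exact h
        · intro h
          exact ⟨h, hbmax x (by simp [h])⟩
      have hb2 := hTle b
      rw [hCb, div_le_iff₀ (hr i)] at hb2
      calc ∑ j' ∈ univ.filter (fun j' => t j' = i), p j' ≤ T * R i := hb2
        _ = R i * T := mul_comm _ _
    · rw [Finset.not_nonempty_iff_eq_empty.1 hne, Finset.sum_empty]
      exact mul_nonneg (hr i).le hT0
  -- p j ≤ T for every job
  have hpT : ∀ j, p j ≤ T := fun j =>
    le_trans (p_le_Ctime hp hr t j (hrle (t j))) (hTle j)
  -- pick the job with maximal completion time in s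
  obtain ⟨j, -, hmax'⟩ := Finset.exists_max_image univ (Ctime p R π s) univ_nonempty
  have hmax : ∀ j', Ctime p R π s j' ≤ Ctime p R π s j := fun j' => hmax' j' (mem_univ _)
  have hCmaxs : Cmax p R π s = Ctime p R π s j :=
    le_antisymm (ciSup_le hmax) (le_ciSup (Set.Finite.bddAbove (Set.finite_range _)) j)
  -- NE: moving j to any machine cannot decrease its completion time
  have hNEj : ∀ i, Ctime p R π s j ≤ Ctime p R π (Function.update s j i) j := by
    intro i
    by_contra h
    push_neg at h
    exact hNE j i (beneficial_of_max hp hr hπ s j i hmax h)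
  have hkey : ∀ i, Ctime p R π s j ≤
      ((∑ j' ∈ univ.filter (fun j' => s j' = i), p j') + p j) / R i := by
    intro i
    have h := le_trans (hNEj i) (Ctime_update_self_le (p := p) (r := R) (π := π) hp hr s j i)
    convert h using 4 <;> ext x <;> simp
  -- loads
  set L0 := ∑ j' ∈ univ.filter (fun j' => s j' = 0), p j' with hL0
  set L1 := ∑ j' ∈ univ.filter (fun j' => s j' = (1 : Fin 2)), p j' with hL1
  set K0 := ∑ j' ∈ univ.filter (fun j' => t j' = 0), p j' with hK0
  set K1 := ∑ j' ∈ univ.filter (fun j' => t j' = (1 : Fin 2)), p j' with hK1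
  have hfilnot : ∀ (u : J → Fin 2),
      univ.filter (fun j' => ¬ u j' = 0) = univ.filter (fun j' => u j' = (1 : Fin 2)) := by
    intro u
    ext x
    simp only [mem_filter, mem_univ, true_and]
    omega
  have hPs : L0 + L1 = ∑ j', p j' := by
    rw [hL0, hL1, ← hfilnot s, Finset.sum_filter_add_sum_filter_not]
  have hPt : K0 + K1 = ∑ j', p j' := by
    rw [hK0, hK1, ← hfilnot t, Finset.sum_filter_add_sum_filter_not]
  have hPT : L0 + L1 ≤ (1 + r) * T := by
    have h0 := hload 0
    have h1 := hload 1
    rw [hR0] at h0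
    rw [hR1] at h1
    rw [← hK0] at h0
    rw [← hK1] at h1
    rw [hPs, ← hPt]
    nlinarith
  have hCj : Ctime p R π s j = (∑ j' ∈ univ.filter (fun j' => s j' = s j), p j') / R (s j) := by
    have h := Ctime_max_eq hp hr s j hmax
    convert h using 3
    ext x
    simp
  have hrp1 : (0 : ℝ) < r + 1 := by linarith
  rw [hCmaxs]
  have hgoal : ∀ X : ℝ, (r + 1) * X ≤ (r + 2) * T → X ≤ (r + 2) / (r + 1) * T := by
    intro X hX
    rw [div_mul_eq_mul_div, le_div_iff₀ hrp1]
    linarith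
  rcases hfin2 (s j) with h | h
  · -- j on machine 0, speed 1
    have hCj' : Ctime p R π s j = L0 := by
      rw [hCj, h, hR0, div_one, ← hL0]
    have hk := hkey 1
    rw [hR1, ← hL1, hCj', le_div_iff₀ hrpos] at hk
    rw [hCj']
    apply hgoal
    have := hpT j
    nlinarith
  · -- j on machine 1, speed r
    have hCj' : Ctime p R π s j = L1 / r := by
      rw [hCj, h, hR1, ← hL1]
    have hk := hkey 0
    rw [hR0, div_one, ← hL0, hCj'] at hk
    rw [hCj']
    apply hgoal
    have hL1eq : L1 = r * (L1 / r) := by field_simp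
    have := hpT j
    linarith [hPT]
end
end
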